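/- arXiv:2605.21718 — 4 statements merged into one kernel-verified Lean document; each statement's English description precedes it below -/
import Mathlib

section
/- For every integer n ≥ 1, the polynomials num(n,x) and den(n,x) are coprime in ℤ[x], i.e. gcd(num(n,x), den(n,x)) = 1. -/
open Polynomial Finset

/-- `h_λ(x) = ∏_{i=1}^{n} (1+x^i)^(⌊n/i⌋ - m_λ(i))` in `ℤ[x]`, where `m_λ(i)` is the
multiplicity of the part `i` in the partition `λ` of `n`. -/
noncomputable def hPoly (n : ℕ) (μ : Nat.Partition n) : Polynomial ℤ :=
  ∏ i ∈ Finset.Icc 1 n, (1 + X ^ i) ^ (n / i - μ.parts.count i)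

/-- `G(n,x)`: the (normalized) gcd of the `h_λ(x)` over all partitions `λ` of `n`. -/
noncomputable def GPoly (n : ℕ) : Polynomial ℤ :=
  Finset.univ.gcd (hPoly n)

theorem GPoly_dvd_sum (n : ℕ) :
    ∃ q : Polynomial ℤ, (∑ μ : Nat.Partition n, hPoly n μ) = GPoly n * q :=
  exists_eq_mul_right_of_dvd
    (Finset.dvd_sum fun μ _ => Finset.gcd_dvd (Finset.mem_univ μ))

/-- `num(n,x) = (∑_{λ ⊢ n} h_λ(x)) / G(n,x)`. -/
noncomputable def numPoly (n : ℕ) : Polynomial ℤ :=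
  (GPoly_dvd_sum n).choose

theorem GPoly_dvd_prod (n : ℕ) :
    ∃ q : Polynomial ℤ,
      (∏ i ∈ Finset.Icc 1 n, ((1 : Polynomial ℤ) + X ^ i) ^ (n / i)) = GPoly n * q :=
  exists_eq_mul_right_of_dvd <|
    dvd_trans (Finset.gcd_dvd (Finset.mem_univ (Nat.Partition.indiscrete n)))
      (Finset.prod_dvd_prod_of_dvd _ _ fun _ _ => pow_dvd_pow _ (Nat.sub_le _ _))

/-- `den(n,x) = (∏_{i=1}^{n} (1+x^i)^⌊n/i⌋) / G(n,x)`. -/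
noncomputable def denPoly (n : ℕ) : Polynomial ℤ :=
  (GPoly_dvd_prod n).choose

/-!
Every irreducible factor of `den(n)` divides some `1 + X ^ i` with `i ≤ n`, so it is a cyclotomic
polynomial `Φ_{2e}` with `e ≤ n`. Let `m` be the sum of `⌊n/j⌋` over the odd multiples `j ≠ e` of
`e` in `[1, n]`. Then `Φ_{2e}^m` divides every `h_λ`, hence `G(n)`, and it suffices to show that
`Φ_{2e}^(m+1)` does not divide `∑ h_λ`.

If `λ` has fewer than `⌊n/e⌋` parts equal to `e`, then `Φ_{2e}^(m+1) ∣ h_λ`: a part equal to an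
odd multiple `j ≥ 3e` of `e` uses up at least three parts `e`. Every other `λ` consists of `⌊n/e⌋`
parts `e` and parts smaller than `e`, so `h_λ = L_λ · H` with `H` independent of `λ` and vanishing
to order exactly `m` at `ζ = exp(πi/e)`, while `L_λ` only involves the `1 + X ^ j` with `j < e`.
Since `1 + ζ ^ j = 2 cos(πj/2e) · exp(πij/2e)`, the values `L_λ(ζ)` all have the same argument and
positive modulus, so `∑ L_λ(ζ) ≠ 0`.
-/

namespace Nat.Partition

variable {n : ℕ} (μ : n.Partition)

theorem sum_count_mul_eq : ∑ j ∈ Icc 1 n, μ.parts.count j * j = n := by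
  classical
  have hsub : μ.parts.toFinset ⊆ Icc 1 n := fun j hj => by
    have hj := Multiset.mem_toFinset.1 hj
    exact mem_Icc.2 ⟨μ.parts_pos hj, μ.le_of_mem_parts hj⟩
  simpa [μ.parts_sum] using (Finset.sum_multiset_count_of_subset μ.parts _ hsub).symm

theorem sum_count_mul_le {s : Finset ℕ} (hs : s ⊆ Icc 1 n) :
    ∑ j ∈ s, μ.parts.count j * j ≤ n :=
  (sum_le_sum_of_subset hs).trans_eq μ.sum_count_mul_eq

theorem count_le_div (j : ℕ) : μ.parts.count j ≤ n / j := by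
  by_cases hj : j ∈ Icc 1 n
  · rw [Nat.le_div_iff_mul_le (mem_Icc.1 hj).1]
    simpa using μ.sum_count_mul_le (singleton_subset_iff.2 hj)
  · rw [Multiset.count_eq_zero.2 fun h => hj (mem_Icc.2 ⟨μ.parts_pos h, μ.le_of_mem_parts h⟩)]
    exact Nat.zero_le _

theorem exists_count_eq_div {e : ℕ} (he : 0 < e) :
    ∃ μ : n.Partition, μ.parts.count e = n / e := by
  refine ⟨.ofSums n (Multiset.replicate (n / e) e + {n % e}) (by simp [Nat.div_add_mod']), ?_⟩
  rw [count_ofSums_of_ne_zero _ he.ne', Multiset.count_add,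
    Multiset.count_replicate_self, Multiset.count_singleton, if_neg (Nat.mod_lt n he).ne',
    add_zero]

end Nat.Partition

theorem IsPrimitiveRoot.pow_eq_neg_one_iff {R : Type*} [CommRing R] [IsDomain R] {ζ : R} {e : ℕ}
    (hζ : IsPrimitiveRoot ζ (2 * e)) (he : 0 < e) (j : ℕ) : ζ ^ j = -1 ↔ 2 * e ∣ j + e := by
  have hζe : ζ ^ e = -1 := (hζ.pow (by omega) (mul_comm 2 e)).eq_neg_one_of_two_right
  rw [← hζ.pow_eq_one_iff_dvd, pow_add, hζe]
  constructor <;> intro h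
  · rw [h, neg_one_mul, neg_neg]
  · linear_combination -h

theorem aeval_one_add_X_pow_eq_zero_iff {R : Type*} [CommRing R] {ζ : R} (j : ℕ) :
    aeval ζ (1 + X ^ j : ℤ[X]) = 0 ↔ ζ ^ j = -1 := by
  simp [add_eq_zero_iff_eq_neg']

theorem cyclotomic_dvd_one_add_X_pow_iff {e : ℕ} (he : 0 < e) (j : ℕ) :
    cyclotomic (2 * e) ℤ ∣ 1 + X ^ j ↔ 2 * e ∣ j + e := by
  have hζ := Complex.isPrimitiveRoot_exp (2 * e) (by omega)
  rw [cyclotomic_eq_minpoly hζ (by omega),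
    ← minpoly.isIntegrallyClosed_dvd_iff (hζ.isIntegral (by omega)),
    aeval_one_add_X_pow_eq_zero_iff, hζ.pow_eq_neg_one_iff he]

theorem exists_cyclotomic_dvd_of_irreducible_dvd {p : ℤ[X]} (hp : Irreducible p) {i : ℕ}
    (hi : 0 < i) (h : p ∣ 1 + X ^ i) : ∃ e, 0 < e ∧ e ∣ i ∧ cyclotomic (2 * e) ℤ ∣ p := by
  have hprod : p ∣ ∏ d ∈ (2 * i).divisors, cyclotomic d ℤ := by
    rw [prod_cyclotomic_eq_X_pow_sub_one (by omega)]
    exact h.trans ⟨X ^ i - 1, by ring⟩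
  obtain ⟨d, hd, hpd⟩ := hp.prime.exists_mem_finset_dvd hprod
  have hd0 : 0 < d := Nat.pos_of_mem_divisors hd
  have hdp : cyclotomic d ℤ ∣ p :=
    (hp.associated_of_dvd (cyclotomic.irreducible hd0) hpd).symm.dvd
  have hμ := Complex.isPrimitiveRoot_exp d hd0.ne'
  have hμi : Complex.exp (2 * Real.pi * Complex.I / d) ^ i = -1 := by
    rw [← aeval_one_add_X_pow_eq_zero_iff, minpoly.isIntegrallyClosed_dvd_iff (hμ.isIntegral hd0),
      ← cyclotomic_eq_minpoly hμ hd0]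
    exact hdp.trans h
  have hdi : ¬ d ∣ i := by
    rw [← hμ.pow_eq_one_iff_dvd, hμi]
    norm_num
  obtain ⟨e, rfl⟩ : 2 ∣ d := by
    by_contra hodd
    exact hdi (((Nat.Prime.coprime_iff_not_dvd Nat.prime_two).2 hodd).symm.dvd_of_dvd_mul_left
      (Nat.dvd_of_mem_divisors hd))
  refine ⟨e, by omega, ?_, hdp⟩
  have hdvd := (hμ.pow_eq_neg_one_iff (by omega) i).1 hμi
  exact (Nat.dvd_add_left (dvd_refl e)).1 ((Dvd.intro_left 2 rfl).trans hdvd)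

theorem exists_cyclotomic_dvd_of_dvd_prod {p : ℤ[X]} (hp : Irreducible p) {n : ℕ} {a : ℕ → ℕ}
    (h : p ∣ ∏ i ∈ Icc 1 n, (1 + X ^ i) ^ a i) :
    ∃ e, 0 < e ∧ e ≤ n ∧ cyclotomic (2 * e) ℤ ∣ p := by
  obtain ⟨i, hi, hpi⟩ := hp.prime.exists_mem_finset_dvd h
  obtain ⟨hi1, hin⟩ := mem_Icc.1 hi
  obtain ⟨e, he, hei, hep⟩ :=
    exists_cyclotomic_dvd_of_irreducible_dvd hp hi1 (hp.prime.dvd_of_dvd_pow hpi)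
  exact ⟨e, he, (Nat.le_of_dvd hi1 hei).trans hin, hep⟩

theorem Polynomial.rootMultiplicity_prod_pow {R ι : Type*} [CommRing R] [IsDomain R]
    (s : Finset ι) (f : ι → R[X]) (k : ι → ℕ) (hf : ∀ i ∈ s, f i ≠ 0) (a : R) :
    rootMultiplicity a (∏ i ∈ s, f i ^ k i) = ∑ i ∈ s, k i * rootMultiplicity a (f i) := by
  classical
  rw [← count_roots, roots_prod _ _ (prod_ne_zero_iff.2 fun i hi => pow_ne_zero _ (hf i hi)),
    Multiset.count_bind]
  simp only [roots_pow, Multiset.count_nsmul, count_roots]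
  rfl

theorem one_add_X_pow_ne_zero {R : Type*} [Semiring R] [NeZero (2 : R)] (j : ℕ) :
    (1 + X ^ j : R[X]) ≠ 0 := fun h =>
  NeZero.ne (2 : R) (by simpa [eval_X_pow, one_add_one_eq_two] using congrArg (eval (1 : R)) h)

theorem rootMultiplicity_one_add_X_pow {K : Type*} [Field K] [CharZero K] {ζ : K} {e : ℕ}
    (hζ : IsPrimitiveRoot ζ (2 * e)) (he : 0 < e) {j : ℕ} (hj : 0 < j) :
    rootMultiplicity ζ (1 + X ^ j) = if 2 * e ∣ j + e then 1 else 0 := by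
  have hroot : (1 + X ^ j : K[X]).IsRoot ζ ↔ 2 * e ∣ j + e := by
    rw [IsRoot, ← hζ.pow_eq_neg_one_iff he]
    simp [add_eq_zero_iff_eq_neg']
  split_ifs with h
  · have hsep : (1 + X ^ j : K[X]).Separable := by
      rw [add_comm, ← sub_neg_eq_add, ← C_1, ← C_neg]
      exact separable_X_pow_sub_C _ (by exact_mod_cast hj.ne') (neg_ne_zero.2 one_ne_zero)
    exact le_antisymm (rootMultiplicity_le_one_of_separable hsep ζ)
      ((rootMultiplicity_pos (one_add_X_pow_ne_zero j)).2 (hroot.2 h))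
  · exact rootMultiplicity_eq_zero (mt hroot.1 h)

theorem Nat.eq_or_three_mul_le_of_two_mul_dvd_add {e j : ℕ} (hj : 0 < j) (h : 2 * e ∣ j + e) :
    j = e ∨ 3 * e ≤ j := by
  obtain ⟨k, hk⟩ := h
  rcases k with _ | _ | k
  · omega
  · omega
  · right
    nlinarith

/-- The `j ∈ [1, n]` with `Φ_{2e} ∣ 1 + X ^ j`. -/
def oddMultiples (n e : ℕ) : Finset ℕ := (Icc 1 n).filter fun j => 2 * e ∣ j + e

section OddMultiples

variable {n e : ℕ}

theorem self_mem_oddMultiples (he : 0 < e) (hen : e ≤ n) : e ∈ oddMultiples n e :=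
  mem_filter.2 ⟨mem_Icc.2 ⟨he, hen⟩, ⟨1, by ring⟩⟩

theorem three_mul_le_of_mem_oddMultiples_erase {j : ℕ} (hj : j ∈ (oddMultiples n e).erase e) :
    3 * e ≤ j := by
  obtain ⟨hje, hj⟩ := mem_erase.1 hj
  obtain ⟨hj, hdvd⟩ := mem_filter.1 hj
  exact (Nat.eq_or_three_mul_le_of_two_mul_dvd_add (mem_Icc.1 hj).1 hdvd).resolve_left hje

theorem Nat.Partition.count_add_three_mul_sum_count_le (μ : n.Partition) (he : 0 < e)
    (hen : e ≤ n) :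
    μ.parts.count e + 3 * ∑ j ∈ (oddMultiples n e).erase e, μ.parts.count j ≤ n / e := by
  have hsub : insert e ((oddMultiples n e).erase e) ⊆ Icc 1 n := by
    rw [insert_erase (self_mem_oddMultiples he hen)]
    exact filter_subset _ _
  rw [Nat.le_div_iff_mul_le he]
  calc (μ.parts.count e + 3 * ∑ j ∈ (oddMultiples n e).erase e, μ.parts.count j) * e
      = μ.parts.count e * e + ∑ j ∈ (oddMultiples n e).erase e, μ.parts.count j * (3 * e) := by
        rw [add_mul, mul_comm 3, mul_assoc, sum_mul]
    _ ≤ μ.parts.count e * e + ∑ j ∈ (oddMultiples n e).erase e, μ.parts.count j * j := by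
        gcongr with j hj
        exact three_mul_le_of_mem_oddMultiples_erase hj
    _ ≤ n := by
        rw [← sum_insert (f := fun j => μ.parts.count j * j) (notMem_erase e _)]
        exact μ.sum_count_mul_le hsub

/-- The exponent of `Φ_{2e}` in `G(n)`; it is attained by the partitions with `⌊n/e⌋` parts `e`. -/
def cyclotomicExponent (n e : ℕ) : ℕ := ∑ j ∈ (oddMultiples n e).erase e, n / j

theorem Nat.Partition.sum_count_oddMultiples_le (μ : n.Partition) (he : 0 < e) (hen : e ≤ n) :
    ∑ j ∈ oddMultiples n e, μ.parts.count j ≤ n / e := by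
  have := μ.count_add_three_mul_sum_count_le he hen
  rw [← add_sum_erase _ _ (self_mem_oddMultiples he hen)]
  omega

theorem Nat.Partition.sum_count_oddMultiples_lt (μ : n.Partition) (he : 0 < e) (hen : e ≤ n)
    (hμ : μ.parts.count e ≠ n / e) : ∑ j ∈ oddMultiples n e, μ.parts.count j < n / e := by
  have := μ.count_add_three_mul_sum_count_le he hen
  rw [← add_sum_erase _ _ (self_mem_oddMultiples he hen)]
  omega

theorem sum_div_sub_count_add_sum_count (he : 0 < e) (hen : e ≤ n) (μ : n.Partition) :
    ∑ j ∈ oddMultiples n e, (n / j - μ.parts.count j) + ∑ j ∈ oddMultiples n e, μ.parts.count j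
      = n / e + cyclotomicExponent n e := by
  rw [← sum_add_distrib, sum_congr rfl fun j _ => Nat.sub_add_cancel (μ.count_le_div j),
    cyclotomicExponent, add_sum_erase _ _ (self_mem_oddMultiples he hen)]

theorem cyclotomicExponent_le (he : 0 < e) (hen : e ≤ n) (μ : n.Partition) :
    cyclotomicExponent n e ≤ ∑ j ∈ oddMultiples n e, (n / j - μ.parts.count j) := by
  have := sum_div_sub_count_add_sum_count he hen μ
  have := μ.sum_count_oddMultiples_le he hen
  omega

theorem cyclotomicExponent_lt (he : 0 < e) (hen : e ≤ n) {μ : n.Partition}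
    (hμ : μ.parts.count e ≠ n / e) :
    cyclotomicExponent n e < ∑ j ∈ oddMultiples n e, (n / j - μ.parts.count j) := by
  have := sum_div_sub_count_add_sum_count he hen μ
  have := μ.sum_count_oddMultiples_lt he hen hμ
  omega

end OddMultiples

theorem cyclotomic_pow_dvd_hPoly {n e : ℕ} (he : 0 < e) (μ : n.Partition) :
    cyclotomic (2 * e) ℤ ^ (∑ j ∈ oddMultiples n e, (n / j - μ.parts.count j)) ∣ hPoly n μ := by
  rw [hPoly, ← prod_filter_mul_prod_filter_not (Icc 1 n) (fun j => 2 * e ∣ j + e),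
    ← prod_pow_eq_pow_sum]
  refine dvd_mul_of_dvd_left (prod_dvd_prod_of_dvd _ _ fun j hj => pow_dvd_pow_of_dvd ?_ _) _
  exact (cyclotomic_dvd_one_add_X_pow_iff he j).2 (mem_filter.1 hj).2

theorem cyclotomic_pow_dvd_GPoly {n e : ℕ} (he : 0 < e) (hen : e ≤ n) :
    cyclotomic (2 * e) ℤ ^ cyclotomicExponent n e ∣ GPoly n :=
  Finset.dvd_gcd fun μ _ =>
    (pow_dvd_pow _ (cyclotomicExponent_le he hen μ)).trans (cyclotomic_pow_dvd_hPoly he μ)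

theorem cyclotomic_pow_succ_dvd_hPoly {n e : ℕ} (he : 0 < e) (hen : e ≤ n) {μ : n.Partition}
    (hμ : μ.parts.count e ≠ n / e) :
    cyclotomic (2 * e) ℤ ^ (cyclotomicExponent n e + 1) ∣ hPoly n μ :=
  (pow_dvd_pow _ (cyclotomicExponent_lt he hen hμ)).trans (cyclotomic_pow_dvd_hPoly he μ)

namespace Nat.Partition

variable {n e : ℕ} (μ : n.Partition)

theorem count_eq_zero_of_count_eq_div (he : 0 < e) (hμ : μ.parts.count e = n / e) {j : ℕ}
    (hej : e < j) : μ.parts.count j = 0 := by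
  by_cases hjn : j ≤ n
  · have hsum := μ.sum_count_mul_le (s := {e, j}) (by
      intro i hi
      rcases mem_insert.1 hi with rfl | hi
      · exact mem_Icc.2 ⟨he, by omega⟩
      · rw [mem_singleton.1 hi]; exact mem_Icc.2 ⟨by omega, hjn⟩)
    rw [sum_pair hej.ne, hμ] at hsum
    have hmod := Nat.div_add_mod' n e
    have hlt := Nat.mod_lt n he
    by_contra h
    nlinarith [Nat.one_le_iff_ne_zero.2 h]
  · exact Nat.le_zero.1 ((μ.count_le_div j).trans_eq (Nat.div_eq_of_lt (by omega)))

theorem sum_count_mul_filter_lt_eq_mod (he : 0 < e) (hen : e ≤ n) (hμ : μ.parts.count e = n / e) :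
    ∑ j ∈ (Icc 1 n).filter (· < e), μ.parts.count j * j = n % e := by
  have hge : ∑ j ∈ (Icc 1 n).filter (¬ · < e), μ.parts.count j * j = n / e * e := by
    rw [sum_eq_single_of_mem e (mem_filter.2 ⟨mem_Icc.2 ⟨he, hen⟩, lt_irrefl e⟩), hμ]
    intro j hj hje
    rw [μ.count_eq_zero_of_count_eq_div he hμ (by simp at hj; omega), zero_mul]
  have hsplit := μ.sum_count_mul_eq
  rw [← sum_filter_add_sum_filter_not (Icc 1 n) (· < e), hge] at hsplit
  have := Nat.div_add_mod' n e
  omega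

end Nat.Partition

noncomputable def hPolyLow (n e : ℕ) (μ : n.Partition) : ℤ[X] :=
  ∏ j ∈ (Icc 1 n).filter (· < e), (1 + X ^ j) ^ (n / j - μ.parts.count j)

noncomputable def hPolyHigh (n e : ℕ) : ℤ[X] :=
  ∏ j ∈ (Icc 1 n).filter (e < ·), (1 + X ^ j) ^ (n / j)

theorem hPoly_eq_hPolyLow_mul_hPolyHigh {n e : ℕ} (he : 0 < e) {μ : n.Partition}
    (hμ : μ.parts.count e = n / e) : hPoly n μ = hPolyLow n e μ * hPolyHigh n e := by
  rw [hPoly, ← prod_filter_mul_prod_filter_not (Icc 1 n) (· < e), hPolyLow, hPolyHigh]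
  congr 1
  calc ∏ j ∈ (Icc 1 n).filter (¬ · < e), (1 + X ^ j) ^ (n / j - μ.parts.count j)
      = ∏ j ∈ (Icc 1 n).filter (e < ·), (1 + X ^ j) ^ (n / j - μ.parts.count j) := by
        refine (prod_subset (monotone_filter_right _ fun j h => by omega) fun j hj hj' => ?_).symm
        obtain rfl : j = e := by simp at hj hj'; omega
        rw [hμ, Nat.sub_self, pow_zero]
    _ = _ := prod_congr rfl fun j hj => by
        rw [μ.count_eq_zero_of_count_eq_div he hμ (mem_filter.1 hj).2, Nat.sub_zero]

theorem rootMultiplicity_map_hPolyHigh {K : Type*} [Field K] [CharZero K] {ζ : K} {n e : ℕ}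
    (hζ : IsPrimitiveRoot ζ (2 * e)) (he : 0 < e) :
    rootMultiplicity ζ ((hPolyHigh n e).map (algebraMap ℤ K)) = cyclotomicExponent n e := by
  have hfilter : ((Icc 1 n).filter (e < ·)).filter (fun j => 2 * e ∣ j + e)
      = (oddMultiples n e).erase e := by
    ext j
    simp only [oddMultiples, mem_filter, mem_erase, mem_Icc]
    constructor
    · rintro ⟨⟨hj, hej⟩, h⟩
      exact ⟨by omega, hj, h⟩
    · rintro ⟨hje, hj, h⟩
      have := (Nat.eq_or_three_mul_le_of_two_mul_dvd_add hj.1 h).resolve_left hje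
      exact ⟨⟨hj, by omega⟩, h⟩
  simp only [hPolyHigh, Polynomial.map_prod, Polynomial.map_pow, Polynomial.map_add,
    Polynomial.map_one, Polynomial.map_X]
  rw [rootMultiplicity_prod_pow _ _ _ fun j _ => one_add_X_pow_ne_zero j, cyclotomicExponent,
    ← hfilter, sum_filter (s := (Icc 1 n).filter (e < ·))]
  refine sum_congr rfl fun j hj => ?_
  rw [rootMultiplicity_one_add_X_pow hζ he (mem_Icc.1 (mem_filter.1 hj).1).1]
  split_ifs <;> simp

open Complex
open scoped Real

theorem Complex.one_add_exp_two_mul_mul_I (x : ℂ) :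
    1 + exp (2 * x * I) = 2 * cos x * exp (x * I) := by
  rw [two_cos, add_mul, ← exp_add, ← exp_add]
  ring_nf
  simp [add_comm]

theorem one_add_exp_two_pi_I_div_pow (e j : ℕ) :
    1 + exp (2 * π * I / (2 * e : ℕ)) ^ j
      = ((2 * Real.cos (π * j / (2 * e)) : ℝ) : ℂ) * exp (π * I / (2 * e : ℕ)) ^ j := by
  have h2 : (j : ℂ) * (2 * π * I / (2 * e : ℕ)) = 2 * ((π * j / (2 * e) : ℝ) : ℂ) * I := by
    push_cast; ring
  have h1 : (j : ℂ) * (π * I / (2 * e : ℕ)) = ((π * j / (2 * e) : ℝ) : ℂ) * I := by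
    push_cast; ring
  rw [← exp_nat_mul, ← exp_nat_mul, h1, h2, one_add_exp_two_mul_mul_I]
  push_cast
  ring

theorem Real.cos_pi_mul_div_two_mul_pos {e j : ℕ} (hj : j < e) :
    0 < Real.cos (π * j / (2 * e)) := by
  have he : (0 : ℝ) < e := by exact_mod_cast (Nat.zero_le j).trans_lt hj
  have hj' : (j : ℝ) < e := by exact_mod_cast hj
  refine Real.cos_pos_of_mem_Ioo ⟨?_, ?_⟩
  · have : 0 ≤ π * j / (2 * e) := by positivity
    linarith [Real.pi_pos]
  · rw [div_lt_div_iff₀ (by positivity) two_pos]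
    nlinarith [Real.pi_pos]

theorem aeval_hPolyLow {n e : ℕ} (he : 0 < e) (hen : e ≤ n) {μ : n.Partition}
    (hμ : μ.parts.count e = n / e) :
    aeval (exp (2 * π * I / (2 * e : ℕ))) (hPolyLow n e μ)
      = ((∏ j ∈ (Icc 1 n).filter (· < e),
            (2 * Real.cos (π * j / (2 * e))) ^ (n / j - μ.parts.count j) : ℝ) : ℂ)
        * exp (π * I / (2 * e : ℕ)) ^ (∑ j ∈ (Icc 1 n).filter (· < e), n / j * j - n % e) := by
  have hexp : ∑ j ∈ (Icc 1 n).filter (· < e), (n / j - μ.parts.count j) * j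
      = ∑ j ∈ (Icc 1 n).filter (· < e), n / j * j - n % e := by
    simp_rw [tsub_mul]
    rw [sum_tsub_distrib _ fun j _ => Nat.mul_le_mul_right j (μ.count_le_div j),
      μ.sum_count_mul_filter_lt_eq_mod he hen hμ]
  rw [hPolyLow, map_prod, ← hexp, ← prod_pow_eq_pow_sum, ofReal_prod, ← prod_mul_distrib]
  refine prod_congr rfl fun j _ => ?_
  rw [map_pow, map_add, map_one, map_pow, aeval_X, one_add_exp_two_pi_I_div_pow, mul_pow,
    ← pow_mul', ofReal_pow]

theorem sum_aeval_hPolyLow_ne_zero {n e : ℕ} (he : 0 < e) (hen : e ≤ n) :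
    ∑ μ ∈ univ.filter (fun μ : n.Partition => μ.parts.count e = n / e),
      aeval (exp (2 * π * I / (2 * e : ℕ))) (hPolyLow n e μ) ≠ 0 := by
  rw [sum_congr rfl fun μ hμ => aeval_hPolyLow he hen (mem_filter.1 hμ).2, ← sum_mul,
    ← ofReal_sum]
  refine mul_ne_zero (ofReal_ne_zero.2 (sum_pos (fun μ _ => prod_pos fun j hj => ?_) ?_).ne')
    (pow_ne_zero _ (exp_ne_zero _))
  · exact pow_pos (mul_pos two_pos (Real.cos_pi_mul_div_two_mul_pos (mem_filter.1 hj).2)) _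
  · obtain ⟨μ, hμ⟩ := Nat.Partition.exists_count_eq_div (n := n) he
    exact ⟨μ, mem_filter.2 ⟨mem_univ _, hμ⟩⟩

theorem sum_hPoly_filter_count_eq_div {n e : ℕ} (he : 0 < e) :
    ∑ μ ∈ univ.filter (fun μ : n.Partition => μ.parts.count e = n / e), hPoly n μ
      = hPolyHigh n e * ∑ μ ∈ univ.filter (fun μ : n.Partition => μ.parts.count e = n / e),
          hPolyLow n e μ := by
  rw [mul_sum]
  exact sum_congr rfl fun μ hμ => by
    rw [hPoly_eq_hPolyLow_mul_hPolyHigh he (mem_filter.1 hμ).2, mul_comm]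

theorem not_X_sub_C_pow_succ_dvd_map_sum_hPoly {n e : ℕ} (he : 0 < e) (hen : e ≤ n) :
    ¬ (X - C (exp (2 * π * I / (2 * e : ℕ)))) ^ (cyclotomicExponent n e + 1)
      ∣ (∑ μ ∈ univ.filter (fun μ : n.Partition => μ.parts.count e = n / e), hPoly n μ).map
          (algebraMap ℤ ℂ) := by
  have hlow := sum_aeval_hPolyLow_ne_zero he hen
  rw [← map_sum, ← eval_map_algebraMap] at hlow
  have hhigh : (hPolyHigh n e).map (algebraMap ℤ ℂ) ≠ 0 :=
    (Polynomial.map_ne_zero_iff (algebraMap ℤ ℂ).injective_int).2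
      (prod_ne_zero_iff.2 fun j _ => pow_ne_zero _ (one_add_X_pow_ne_zero j))
  have hlow' : (∑ μ ∈ univ.filter (fun μ : n.Partition => μ.parts.count e = n / e),
      hPolyLow n e μ).map (algebraMap ℤ ℂ) ≠ 0 := fun h => hlow (by rw [h, eval_zero])
  rw [sum_hPoly_filter_count_eq_div he, Polynomial.map_mul,
    ← le_rootMultiplicity_iff (mul_ne_zero hhigh hlow'),
    rootMultiplicity_mul (mul_ne_zero hhigh hlow'),
    rootMultiplicity_map_hPolyHigh (isPrimitiveRoot_exp _ (by omega)) he,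
    rootMultiplicity_eq_zero hlow]
  omega

theorem not_cyclotomic_pow_succ_dvd_sum_hPoly {n e : ℕ} (he : 0 < e) (hen : e ≤ n) :
    ¬ cyclotomic (2 * e) ℤ ^ (cyclotomicExponent n e + 1) ∣ ∑ μ : n.Partition, hPoly n μ := by
  intro hdvd
  have hrest : cyclotomic (2 * e) ℤ ^ (cyclotomicExponent n e + 1)
      ∣ ∑ μ ∈ univ.filter (fun μ : n.Partition => μ.parts.count e ≠ n / e), hPoly n μ :=
    dvd_sum fun μ hμ => cyclotomic_pow_succ_dvd_hPoly he hen (mem_filter.1 hμ).2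
  rw [← sum_filter_add_sum_filter_not univ fun μ : n.Partition => μ.parts.count e = n / e,
    dvd_add_left hrest] at hdvd
  have hζ := isPrimitiveRoot_exp (2 * e) (by omega)
  refine not_X_sub_C_pow_succ_dvd_map_sum_hPoly he hen
    ((pow_dvd_pow_of_dvd (dvd_iff_isRoot.2 (hζ.isRoot_cyclotomic (by omega))) _).trans ?_)
  simpa only [Polynomial.map_pow, map_cyclotomic] using map_dvd (algebraMap ℤ ℂ) hdvd

theorem GPoly_mul_numPoly (n : ℕ) : GPoly n * numPoly n = ∑ μ : n.Partition, hPoly n μ :=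
  (GPoly_dvd_sum n).choose_spec.symm

theorem GPoly_mul_denPoly (n : ℕ) :
    GPoly n * denPoly n = ∏ i ∈ Icc 1 n, ((1 : ℤ[X]) + X ^ i) ^ (n / i) :=
  (GPoly_dvd_prod n).choose_spec.symm

theorem denPoly_ne_zero (n : ℕ) : denPoly n ≠ 0 := fun h => by
  have := GPoly_mul_denPoly n
  rw [h, mul_zero, eq_comm, prod_eq_zero_iff] at this
  obtain ⟨i, -, hi⟩ := this
  exact one_add_X_pow_ne_zero i (pow_eq_zero_iff'.1 hi).1

theorem gcd_numPoly_denPoly_eq_one_general (n : ℕ) :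
    gcd (numPoly n) (denPoly n) = 1 := by
  rw [← _root_.normalize_gcd, normalize_eq_one]
  by_contra hunit
  obtain ⟨p, hp, hpg⟩ :=
    WfDvdMonoid.exists_irreducible_factor hunit (gcd_ne_zero_of_right (denPoly_ne_zero n))
  have hpden : p ∣ ∏ i ∈ Icc 1 n, ((1 : ℤ[X]) + X ^ i) ^ (n / i) :=
    GPoly_mul_denPoly n ▸ (hpg.trans (gcd_dvd_right _ _)).mul_left _
  obtain ⟨e, he, hen, hep⟩ := exists_cyclotomic_dvd_of_dvd_prod hp hpden
  apply not_cyclotomic_pow_succ_dvd_sum_hPoly he hen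
  rw [← GPoly_mul_numPoly, pow_succ]
  exact mul_dvd_mul (cyclotomic_pow_dvd_GPoly he hen) (hep.trans (hpg.trans (gcd_dvd_left _ _)))

/-- For every integer `n ≥ 1`, the polynomials `num(n,x)` and `den(n,x)` are coprime
in `ℤ[x]`, i.e. `gcd(num(n,x), den(n,x)) = 1`. -/
theorem gcd_numPoly_denPoly_eq_one (n : ℕ) (hn : 1 ≤ n) :
    gcd (numPoly n) (denPoly n) = 1 :=
  gcd_numPoly_denPoly_eq_one_general n
end

section
/- For every integer n ≥ 1 and every integer d with 1 ≤ d ≤ n, the cyclotomic polynomial Φ_{2d}(x) does not divide num(n,x) in ℤ[x]; equivalently, num(n, ζ_{2d}) ≠ 0 where ζ_{2d} := e^{πi/d} is a primitive 2d-th root of unity. -/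
open Polynomial Finset

namespace CyclAux

def pred (d i : ℕ) : Prop := d ∣ i ∧ Odd (i / d)

instance (d i : ℕ) : Decidable (pred d i) := by unfold pred; infer_instance

def Dset (n d : ℕ) : Finset ℕ := (Finset.Icc 1 n).filter (pred d)
def Cset (n d : ℕ) : Finset ℕ := (Finset.Icc 1 n).filter (fun i => ¬ pred d i)

noncomputable def Phi (d : ℕ) : Polynomial ℤ := cyclotomic (2*d) ℤ
noncomputable def cp (d i : ℕ) : Polynomial ℤ := (1 + X ^ i) /ₘ Phi d

def Em (n d : ℕ) (μ : Nat.Partition n) : ℕ := ∑ i ∈ Dset n d, (n / i - μ.parts.count i)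
def Mm (n d : ℕ) : ℕ := (∑ i ∈ Dset n d, n / i) - n / d

noncomputable def kP (n d : ℕ) (μ : Nat.Partition n) : Polynomial ℤ :=
  (∏ i ∈ Dset n d, (cp d i) ^ (n / i - μ.parts.count i)) *
  ∏ i ∈ Cset n d, (1 + X ^ i) ^ (n / i - μ.parts.count i)

noncomputable def PP (n d : ℕ) : Polynomial ℤ :=
  ∑ μ : Nat.Partition n, (Phi d) ^ (Em n d μ - Mm n d) * kP n d μ

noncomputable def zet (d : ℕ) : ℂ := Complex.exp (Real.pi * Complex.I / d)
noncomputable def ww (d : ℕ) : ℂ := Complex.exp (Real.pi * Complex.I / (2*(d:ℂ)))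

variable {n d : ℕ}

/-- arithmetic: total weighted count -/
lemma sum_weighted (μ : Nat.Partition n) :
    ∑ i ∈ Finset.Icc 1 n, i * μ.parts.count i = n := by
  have hsub : μ.parts.toFinset ⊆ Finset.Icc 1 n := by
    intro a ha
    rw [Multiset.mem_toFinset] at ha
    exact Finset.mem_Icc.mpr ⟨μ.parts_pos ha, (Multiset.le_sum_of_mem ha).trans_eq μ.parts_sum⟩
  calc ∑ i ∈ Finset.Icc 1 n, i * μ.parts.count i
      = ∑ i ∈ μ.parts.toFinset, i * μ.parts.count i := by
        refine (Finset.sum_subset hsub ?_).symm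
        intro x _ hx
        rw [Multiset.mem_toFinset] at hx
        simp [Multiset.count_eq_zero_of_notMem hx]
    _ = ∑ i ∈ μ.parts.toFinset, μ.parts.count i • (id i) := by
        exact Finset.sum_congr rfl fun x _ => by simp [mul_comm]
    _ = n := by rw [← Finset.sum_multiset_map_count μ.parts id]; simpa using μ.parts_sum

lemma count_le_div (μ : Nat.Partition n) {i : ℕ} (hi : i ∈ Finset.Icc 1 n) :
    μ.parts.count i ≤ n / i := by
  rw [Finset.mem_Icc] at hi
  rw [Nat.le_div_iff_mul_le (by omega : 0 < i)]
  rw [mul_comm]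
  calc i * μ.parts.count i ≤ ∑ j ∈ Finset.Icc 1 n, j * μ.parts.count j :=
        Finset.single_le_sum (f := fun j => j * μ.parts.count j)
          (fun j _ => Nat.zero_le _) (Finset.mem_Icc.mpr hi)
    _ = n := sum_weighted μ

lemma d_mem_Dset (hd : 1 ≤ d) (hdn : d ≤ n) : d ∈ Dset n d := by
  simp only [Dset, Finset.mem_filter, Finset.mem_Icc, pred]
  exact ⟨⟨hd, hdn⟩, dvd_refl d, by rw [Nat.div_self (by omega)]; exact odd_one⟩

lemma sum_count_Dset_le (hd : 1 ≤ d) (μ : Nat.Partition n) :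
    ∑ i ∈ Dset n d, μ.parts.count i ≤ n / d := by
  rw [Nat.le_div_iff_mul_le (by omega : 0 < d)]
  calc (∑ i ∈ Dset n d, μ.parts.count i) * d = ∑ i ∈ Dset n d, d * μ.parts.count i := by
        rw [Finset.sum_mul]; exact Finset.sum_congr rfl fun i _ => by ring
    _ ≤ ∑ i ∈ Dset n d, i * μ.parts.count i := by
        refine Finset.sum_le_sum fun i hi => ?_
        have : d ∣ i := ((Finset.mem_filter.mp hi).2).1
        exact Nat.mul_le_mul_right _ (Nat.le_of_dvd (by
          have := (Finset.mem_Icc.mp (Finset.mem_filter.mp hi).1).1; omega) this)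
    _ ≤ ∑ i ∈ Finset.Icc 1 n, i * μ.parts.count i :=
        Finset.sum_le_sum_of_subset (Finset.filter_subset _ _)
    _ = n := sum_weighted μ

lemma Em_eq (μ : Nat.Partition n) :
    Em n d μ = (∑ i ∈ Dset n d, n / i) - ∑ i ∈ Dset n d, μ.parts.count i := by
  exact Finset.sum_tsub_distrib _ fun i hi => count_le_div μ (Finset.mem_filter.mp hi).1

lemma Mm_le_Em (hd : 1 ≤ d) (hdn : d ≤ n) (μ : Nat.Partition n) : Mm n d ≤ Em n d μ := by
  rw [Em_eq μ, Mm]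
  exact Nat.sub_le_sub_left (sum_count_Dset_le hd μ) _

lemma Em_eq_Mm_iff (hd : 1 ≤ d) (hdn : d ≤ n) (μ : Nat.Partition n) :
    Em n d μ = Mm n d ↔ ∑ i ∈ Dset n d, μ.parts.count i = n / d := by
  have h1 := sum_count_Dset_le hd μ
  have h2 : n / d ≤ ∑ i ∈ Dset n d, n / i :=
    Finset.single_le_sum (fun i _ => Nat.zero_le _) (d_mem_Dset hd hdn)
  rw [Em_eq μ, Mm]
  omega

/-- classification part 1 -/
lemma minimal_count_eq (hd : 1 ≤ d) (hdn : d ≤ n) (μ : Nat.Partition n)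
    (hmin : ∑ i ∈ Dset n d, μ.parts.count i = n / d) :
    ∀ i ∈ Dset n d, μ.parts.count i = if i = d then n / d else 0 := by
  have hz : ∀ i ∈ Dset n d, i ≠ d → μ.parts.count i = 0 := by
    intro i hi hne
    by_contra hc
    have hA : 1 ≤ μ.parts.count i := Nat.pos_of_ne_zero hc
    -- i is an odd multiple of d, i ≠ d, so i ≥ 3d
    obtain ⟨⟨hi1, hin⟩, hj, hodd⟩ :
        (1 ≤ i ∧ i ≤ n) ∧ d ∣ i ∧ Odd (i / d) := by
      have := Finset.mem_filter.mp hi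
      exact ⟨Finset.mem_Icc.mp this.1, this.2⟩
    obtain ⟨j, rfl⟩ := hj
    have hjd : (d * j) / d = j := Nat.mul_div_cancel_left j (by omega)
    rw [hjd] at hodd
    obtain ⟨t, rfl⟩ := hodd
    have hj3 : 3 * d ≤ d * (2 * t + 1) := by
      have ht : 1 ≤ t := by
        rcases Nat.eq_zero_or_pos t with h | h
        · exfalso; apply hne; rw [h]; ring
        · exact h
      nlinarith
    set i := d * (2 * t + 1) with hidef
    -- weighted sums
    have hsplit : i * μ.parts.count i + ∑ j ∈ (Dset n d).erase i, j * μ.parts.count j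
        = ∑ j ∈ Dset n d, j * μ.parts.count j :=
          Finset.add_sum_erase _ (fun j => j * μ.parts.count j) hi
    have hcsplit : μ.parts.count i + ∑ j ∈ (Dset n d).erase i, μ.parts.count j
        = ∑ j ∈ Dset n d, μ.parts.count j :=
          Finset.add_sum_erase _ (fun j => μ.parts.count j) hi
    have hle : ∑ j ∈ Dset n d, j * μ.parts.count j ≤ n := by
      calc ∑ j ∈ Dset n d, j * μ.parts.count j
          ≤ ∑ j ∈ Finset.Icc 1 n, j * μ.parts.count j :=
            Finset.sum_le_sum_of_subset (Finset.filter_subset _ _)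
        _ = n := sum_weighted μ
    have hge : ∑ j ∈ (Dset n d).erase i, d * μ.parts.count j
        ≤ ∑ j ∈ (Dset n d).erase i, j * μ.parts.count j := by
      refine Finset.sum_le_sum fun j hjm => ?_
      have hjm' := Finset.mem_filter.mp (Finset.mem_of_mem_erase hjm)
      exact Nat.mul_le_mul_right _ (Nat.le_of_dvd (by
        have := (Finset.mem_Icc.mp hjm'.1).1; omega) hjm'.2.1)
    set A := μ.parts.count i with hAdef
    set B := ∑ j ∈ (Dset n d).erase i, μ.parts.count j with hBdef
    have hdB : ∑ j ∈ (Dset n d).erase i, d * μ.parts.count j = d * B := by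
      rw [Finset.mul_sum]
    have hx3 : 3 * (d * A) ≤ i * A := by
      rw [← mul_assoc]; exact Nat.mul_le_mul_right A hj3
    have hdA : d * 1 ≤ d * A := Nat.mul_le_mul_left d hA
    have hAB : A + B = n / d := by rw [← hmin] at *; exact hcsplit
    have hdAB : d * A + d * B = d * (n / d) := by rw [← Nat.mul_add, hAB]
    have hmod : d * (n / d) + n % d = n := Nat.div_add_mod n d
    have hmd : n % d < d := Nat.mod_lt _ (by omega)
    omega
  intro i hi
  by_cases hie : i = d
  · have h1 : μ.parts.count i + ∑ j ∈ (Dset n d).erase i, μ.parts.count j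
        = ∑ j ∈ Dset n d, μ.parts.count j :=
      Finset.add_sum_erase _ (fun j => μ.parts.count j) hi
    rw [hmin] at h1
    have hz' : ∑ j ∈ (Dset n d).erase i, μ.parts.count j = 0 := by
      refine Finset.sum_eq_zero fun j hjm => ?_
      exact hz j (Finset.mem_of_mem_erase hjm)
        (by have := Finset.ne_of_mem_erase hjm; omega)
    rw [if_pos hie]
    omega
  · rw [if_neg hie]; exact hz i hi hie

lemma minimal_weighted_Cset (hd : 1 ≤ d) (hdn : d ≤ n) (μ : Nat.Partition n)
    (hmin : ∑ i ∈ Dset n d, μ.parts.count i = n / d) :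
    ∑ i ∈ Cset n d, i * μ.parts.count i = n % d := by
  have htot : ∑ i ∈ Dset n d, i * μ.parts.count i + ∑ i ∈ Cset n d, i * μ.parts.count i = n := by
    rw [Dset, Cset, Finset.sum_filter_add_sum_filter_not]
    exact sum_weighted μ
  have hD : ∑ i ∈ Dset n d, i * μ.parts.count i = d * (n / d) := by
    rw [Finset.sum_eq_single_of_mem d (d_mem_Dset hd hdn)]
    · rw [minimal_count_eq hd hdn μ hmin d (d_mem_Dset hd hdn), if_pos rfl]
    · intro j hj hne
      rw [minimal_count_eq hd hdn μ hmin j hj, if_neg hne, Nat.mul_zero]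
  have hmod : d * (n / d) + n % d = n := Nat.div_add_mod n d
  omega

lemma minimal_small_parts (hd : 1 ≤ d) (hdn : d ≤ n) (μ : Nat.Partition n)
    (hmin : ∑ i ∈ Dset n d, μ.parts.count i = n / d) :
    ∀ i ∈ Cset n d, 0 < μ.parts.count i → i ≤ n % d := by
  intro i hi hpos
  have h1 : i * μ.parts.count i ≤ n % d := by
    rw [← minimal_weighted_Cset hd hdn μ hmin]
    exact Finset.single_le_sum (f := fun j => j * μ.parts.count j)
      (fun j _ => Nat.zero_le _) hi
  calc i = i * 1 := by ring
    _ ≤ i * μ.parts.count i := Nat.mul_le_mul_left i hpos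
    _ ≤ n % d := h1


/-! ### complex root basics -/

lemma zet_ne_zero : zet d ≠ 0 := Complex.exp_ne_zero _

lemma zet_prim (hd : 1 ≤ d) : IsPrimitiveRoot (zet d) (2*d) := by
  have h := Complex.isPrimitiveRoot_exp (2*d) (by omega)
  have : Complex.exp (2 * Real.pi * Complex.I / (2*d : ℕ)) = zet d := by
    rw [zet]
    congr 1
    have hdc : (d : ℂ) ≠ 0 := Nat.cast_ne_zero.mpr (by omega)
    push_cast
    field_simp
  rwa [this] at h

lemma zet_pow_d (hd : 1 ≤ d) : zet d ^ d = -1 := by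
  have hdc : (d : ℂ) ≠ 0 := Nat.cast_ne_zero.mpr (by omega)
  rw [zet, ← Complex.exp_nat_mul]
  have : (d : ℂ) * (Real.pi * Complex.I / d) = Real.pi * Complex.I := by
    field_simp
  rw [this, Complex.exp_pi_mul_I]

lemma aeval_phi (hd : 1 ≤ d) : aeval (zet d) (Phi d) = 0 := by
  have h := (zet_prim hd).isRoot_cyclotomic (by omega : 0 < 2*d)
  rw [Phi, aeval_def, ← eval_map, map_cyclotomic]
  exact h

/-! ### divisibility of 1 + X^i by Phi -/

lemma phi_monic : (Phi d).Monic := cyclotomic.monic _ ℤ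

lemma phi_prime (hd : 1 ≤ d) : Prime (Phi d) :=
  UniqueFactorizationMonoid.irreducible_iff_prime.mp
    (cyclotomic.irreducible (by omega : 0 < 2*d))

lemma phi_not_dvd_sub (hd : 1 ≤ d) {i : ℕ} (hi : i ∈ Dset n d) :
    ¬ Phi d ∣ (X : Polynomial ℤ) ^ i - 1 := by
  rintro ⟨t, ht⟩
  have h1 : (zet d) ^ i - 1 = 0 := by
    have := congrArg (aeval (zet d)) ht
    simpa [aeval_phi hd] using this
  have h2 : (2*d) ∣ i := ((zet_prim hd).pow_eq_one_iff_dvd i).mp (by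
    have : (zet d) ^ i = 1 := by linear_combination h1
    exact this)
  obtain ⟨-, hj, hodd⟩ : (1 ≤ i ∧ i ≤ n) ∧ d ∣ i ∧ Odd (i / d) := by
    have := Finset.mem_filter.mp hi
    exact ⟨Finset.mem_Icc.mp this.1, this.2⟩
  obtain ⟨j, rfl⟩ := hj
  rw [Nat.mul_div_cancel_left j (by omega : 0 < d)] at hodd
  obtain ⟨k, hk⟩ := h2
  obtain ⟨t', rfl⟩ := hodd
  have : d * (2*t'+1) = d * (2*k) := by rw [hk]; ring
  have := Nat.eq_of_mul_eq_mul_left (by omega : 0 < d) this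
  omega

lemma phi_dvd (hd : 1 ≤ d) {i : ℕ} (hi : i ∈ Dset n d) :
    Phi d ∣ (1 + X ^ i : Polynomial ℤ) := by
  have hmem := Finset.mem_filter.mp hi
  obtain ⟨j, rfl⟩ := hmem.2.1
  have h2i : Phi d ∣ (X : Polynomial ℤ) ^ (2*(d*j)) - 1 := by
    refine dvd_trans (cyclotomic.dvd_X_pow_sub_one (2*d) ℤ) ?_
    have := sub_dvd_pow_sub_pow ((X : Polynomial ℤ)^(2*d)) 1 j
    simpa [← pow_mul, mul_assoc] using this
  have hfac : (X : Polynomial ℤ) ^ (2*(d*j)) - 1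
      = ((X : Polynomial ℤ) ^ (d*j) - 1) * (1 + X ^ (d*j)) := by
    have h2 : (X : Polynomial ℤ) ^ (2*(d*j)) = X ^ (d*j) * X ^ (d*j) := by
      rw [two_mul, pow_add]
    rw [h2]; ring
  rw [hfac] at h2i
  rcases (phi_prime hd).dvd_mul.mp h2i with h | h
  · exact absurd h (phi_not_dvd_sub hd hi)
  · exact h

lemma cp_spec (hd : 1 ≤ d) {i : ℕ} (hi : i ∈ Dset n d) :
    Phi d * cp d i = 1 + X ^ i := by
  obtain ⟨t, ht⟩ := phi_dvd hd hi
  rw [cp, ht, mul_divByMonic_cancel_left t phi_monic]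

lemma hPoly_eq (hd : 1 ≤ d) (μ : Nat.Partition n) :
    hPoly n μ = Phi d ^ Em n d μ * kP n d μ := by
  have hsplit : hPoly n μ
      = (∏ i ∈ Dset n d, (1 + X ^ i : Polynomial ℤ) ^ (n / i - μ.parts.count i)) *
        ∏ i ∈ Cset n d, (1 + X ^ i : Polynomial ℤ) ^ (n / i - μ.parts.count i) := by
    rw [hPoly, Dset, Cset]
    exact (Finset.prod_filter_mul_prod_filter_not _ _ _).symm
  have hD : (∏ i ∈ Dset n d, (1 + X ^ i : Polynomial ℤ) ^ (n / i - μ.parts.count i))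
      = Phi d ^ Em n d μ * ∏ i ∈ Dset n d, (cp d i) ^ (n / i - μ.parts.count i) := by
    calc (∏ i ∈ Dset n d, (1 + X ^ i : Polynomial ℤ) ^ (n / i - μ.parts.count i))
        = ∏ i ∈ Dset n d, (Phi d ^ (n / i - μ.parts.count i) *
            (cp d i) ^ (n / i - μ.parts.count i)) := by
          refine Finset.prod_congr rfl fun i hi => ?_
          rw [← mul_pow, cp_spec hd hi]
      _ = (∏ i ∈ Dset n d, Phi d ^ (n / i - μ.parts.count i)) *
            ∏ i ∈ Dset n d, (cp d i) ^ (n / i - μ.parts.count i) := Finset.prod_mul_distrib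
      _ = Phi d ^ Em n d μ * ∏ i ∈ Dset n d, (cp d i) ^ (n / i - μ.parts.count i) := by
          rw [Finset.prod_pow_eq_pow_sum]; rfl
  rw [hsplit, hD, kP]
  ring

lemma sum_hPoly_eq (hd : 1 ≤ d) (hdn : d ≤ n) :
    (∑ μ : Nat.Partition n, hPoly n μ) = Phi d ^ Mm n d * PP n d := by
  rw [PP, Finset.mul_sum]
  refine Finset.sum_congr rfl fun μ _ => ?_
  rw [hPoly_eq hd μ, ← mul_assoc, ← pow_add,
    Nat.add_sub_cancel' (Mm_le_Em hd hdn μ)]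


/-! ### the key factorization 1 + ζ^i = w^i · 2cos(iπ/2d) -/

lemma ww_pow (hd : 1 ≤ d) (i : ℕ) :
    ww d ^ i = Complex.exp ((↑(i * Real.pi / (2*d)) : ℂ) * Complex.I) := by
  have hdc : (d : ℂ) ≠ 0 := Nat.cast_ne_zero.mpr (by omega)
  rw [ww, ← Complex.exp_nat_mul]
  congr 1
  push_cast
  field_simp

lemma zet_pow (hd : 1 ≤ d) (i : ℕ) :
    zet d ^ i = Complex.exp (2 * (↑(i * Real.pi / (2*d)) : ℂ) * Complex.I) := by
  have hdc : (d : ℂ) ≠ 0 := Nat.cast_ne_zero.mpr (by omega)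
  rw [zet, ← Complex.exp_nat_mul]
  congr 1
  push_cast
  field_simp

lemma one_add_zet_pow (hd : 1 ≤ d) (i : ℕ) :
    1 + zet d ^ i = ww d ^ i * ((2 * Real.cos (i * Real.pi / (2*d)) : ℝ) : ℂ) := by
  rw [zet_pow hd i, ww_pow hd i]
  set a : ℝ := i * Real.pi / (2*d) with ha
  clear_value a
  have h1 : Complex.exp ((a:ℂ)*Complex.I) * Complex.exp ((a:ℂ)*Complex.I)
      = Complex.exp (2*(a:ℂ)*Complex.I) := by
    rw [← Complex.exp_add]; ring_nf
  have h2 : Complex.exp ((a:ℂ)*Complex.I) * Complex.exp (-(a:ℂ)*Complex.I) = 1 := by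
    rw [← Complex.exp_add, show ((a:ℂ)*Complex.I + -(a:ℂ)*Complex.I = 0) from by ring]
    exact Complex.exp_zero
  calc 1 + Complex.exp (2*(a:ℂ)*Complex.I)
      = Complex.exp ((a:ℂ)*Complex.I) * (Complex.exp ((a:ℂ)*Complex.I)
          + Complex.exp (-(a:ℂ)*Complex.I)) := by
        rw [mul_add, h1, h2]; ring
    _ = Complex.exp ((a:ℂ)*Complex.I) * (2 * Complex.cos (a:ℂ)) := by
        rw [Complex.two_cos]
    _ = Complex.exp ((a:ℂ)*Complex.I) * ((2 * Real.cos a : ℝ) : ℂ) := by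
        push_cast [Complex.ofReal_cos]
        ring

lemma one_add_zet_ne (hd : 1 ≤ d) {i : ℕ} (hi : i ∈ Cset n d) :
    1 + zet d ^ i ≠ 0 := by
  intro h
  have hz1 : zet d ^ i = -1 := by linear_combination h
  have h2 : zet d ^ (2*i) = 1 := by
    rw [two_mul, pow_add, hz1]; ring
  have hdvd : 2*d ∣ 2*i := ((zet_prim hd).pow_eq_one_iff_dvd _).mp h2
  obtain ⟨k, hk⟩ := hdvd
  have hik : i = d * k := by
    have : 2*i = 2*(d*k) := by rw [hk]; ring
    omega
  have hzk : ((-1 : ℂ)) ^ k = -1 := by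
    rw [hik, pow_mul, zet_pow_d hd] at hz1
    exact hz1
  have hodd : Odd k := by
    rcases Nat.even_or_odd k with he | ho
    · exfalso
      rw [he.neg_one_pow] at hzk
      norm_num at hzk
    · exact ho
  have := Finset.mem_filter.mp hi
  apply this.2
  refine ⟨⟨k, hik⟩, ?_⟩
  rw [hik, Nat.mul_div_cancel_left k (by omega : 0 < d)]
  exact hodd

lemma aeval_cp_ne (hd : 1 ≤ d) {i : ℕ} (hi : i ∈ Dset n d) :
    aeval (zet d) (cp d i) ≠ 0 := by
  intro h
  have hi1 : 1 ≤ i := (Finset.mem_Icc.mp (Finset.mem_filter.mp hi).1).1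
  set f : ℤ →+* ℂ := algebraMap ℤ ℂ with hf
  have hfac : (Phi d).map f * (cp d i).map f = 1 + X ^ i := by
    have := congrArg (fun p => Polynomial.map f p) (cp_spec hd hi)
    simpa using this
  have hr1 : (X - C (zet d)) ∣ (Phi d).map f := by
    rw [dvd_iff_isRoot, IsRoot, eval_map, ← aeval_def]
    exact aeval_phi hd
  have hr2 : (X - C (zet d)) ∣ (cp d i).map f := by
    rw [dvd_iff_isRoot, IsRoot, eval_map, ← aeval_def]
    exact h
  have hsq : (X - C (zet d))^2 ∣ (1 + X ^ i : Polynomial ℂ) := by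
    rw [← hfac, sq]
    exact mul_dvd_mul hr1 hr2
  obtain ⟨s, hs⟩ := hsq
  have hder := congrArg (fun p => Polynomial.eval (zet d) (Polynomial.derivative p)) hs
  simp only [derivative_add, derivative_one, derivative_X_pow, derivative_mul,
    derivative_pow, derivative_sub, derivative_X, derivative_C, eval_add, eval_mul,
    eval_pow, eval_sub, eval_X, eval_C, eval_natCast, eval_zero, eval_one, zero_add,
    sub_self, mul_zero, zero_mul, add_zero, sub_zero, mul_one] at hder
  have hcast : (i : ℂ) ≠ 0 := Nat.cast_ne_zero.mpr (by omega)
  have hzp : zet d ^ (i-1) ≠ 0 := pow_ne_zero _ zet_ne_zero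
  rw [show ((0:ℂ)^2 = 0) from by ring] at hder
  simp at hder
  rcases hder with h0 | ⟨hz0, -⟩
  · omega
  · exact zet_ne_zero hz0


/-! ### evaluation of PP at zeta -/

noncomputable def Cc (n d : ℕ) : ℂ :=
  ∏ i ∈ Dset n d, (aeval (zet d) (cp d i)) ^ (n / i - if i = d then n / d else 0)

noncomputable def Dc (n d : ℕ) : ℂ := ∏ i ∈ Cset n d, (1 + zet d ^ i) ^ (n / i)

noncomputable def gR (n d : ℕ) (μ : Nat.Partition n) : ℝ :=
  ∏ i ∈ Cset n d, (2 * Real.cos (i * Real.pi / (2*d))) ^ (μ.parts.count i)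

noncomputable def gg (n d : ℕ) (μ : Nat.Partition n) : ℝ :=
  if Em n d μ = Mm n d then (gR n d μ)⁻¹ else 0

noncomputable def c0 (n d : ℕ) : ℂ := Cc n d * Dc n d / ww d ^ (n % d)

lemma ww_ne_zero : ww d ≠ 0 := Complex.exp_ne_zero _

lemma Cc_ne_zero (hd : 1 ≤ d) : Cc n d ≠ 0 := by
  rw [Cc]
  rw [Finset.prod_ne_zero_iff]
  exact fun i hi => pow_ne_zero _ (aeval_cp_ne hd hi)

lemma Dc_ne_zero (hd : 1 ≤ d) : Dc n d ≠ 0 := by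
  rw [Dc, Finset.prod_ne_zero_iff]
  exact fun i hi => pow_ne_zero _ (one_add_zet_ne hd hi)

lemma c0_ne_zero (hd : 1 ≤ d) : c0 n d ≠ 0 :=
  div_ne_zero (mul_ne_zero (Cc_ne_zero hd) (Dc_ne_zero hd)) (pow_ne_zero _ ww_ne_zero)

lemma gR_pos (hd : 1 ≤ d) (hdn : d ≤ n) (μ : Nat.Partition n)
    (hmin : Em n d μ = Mm n d) : 0 < gR n d μ := by
  have hmin' := (Em_eq_Mm_iff hd hdn μ).mp hmin
  rw [gR]
  refine Finset.prod_pos fun i hi => ?_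
  rcases Nat.eq_zero_or_pos (μ.parts.count i) with h0 | hpos
  · rw [h0, pow_zero]; norm_num
  · refine pow_pos ?_ _
    have hir : i ≤ n % d := minimal_small_parts hd hdn μ hmin' i hi hpos
    have hid : i < d := lt_of_le_of_lt hir (Nat.mod_lt _ (by omega))
    have hpi := Real.pi_pos
    have hcos : 0 < Real.cos (i * Real.pi / (2*d)) := by
      apply Real.cos_pos_of_mem_Ioo
      constructor
      · have : (0:ℝ) ≤ i * Real.pi / (2*d) := by positivity
        linarith
      · rw [div_lt_iff₀ (by positivity : (0:ℝ) < 2*d)]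
        have hidr : (i:ℝ) < d := by exact_mod_cast hid
        nlinarith
    linarith

lemma V_eq (hd : 1 ≤ d) (hdn : d ≤ n) (μ : Nat.Partition n)
    (hmin : ∑ i ∈ Dset n d, μ.parts.count i = n / d) :
    ∏ i ∈ Cset n d, (1 + zet d ^ i) ^ (μ.parts.count i)
      = ww d ^ (n % d) * ((gR n d μ : ℝ) : ℂ) := by
  calc ∏ i ∈ Cset n d, (1 + zet d ^ i) ^ (μ.parts.count i)
      = ∏ i ∈ Cset n d, (ww d ^ (i * μ.parts.count i) *
          (((2 * Real.cos (i * Real.pi / (2*d))) ^ (μ.parts.count i) : ℝ) : ℂ)) := by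
        refine Finset.prod_congr rfl fun i _ => ?_
        rw [one_add_zet_pow hd i, mul_pow, ← pow_mul]
        push_cast
        ring
    _ = (∏ i ∈ Cset n d, ww d ^ (i * μ.parts.count i)) *
          ∏ i ∈ Cset n d, (((2 * Real.cos (i * Real.pi / (2*d))) ^ (μ.parts.count i) : ℝ) : ℂ) :=
        Finset.prod_mul_distrib
    _ = ww d ^ (n % d) * ((gR n d μ : ℝ) : ℂ) := by
        rw [Finset.prod_pow_eq_pow_sum, minimal_weighted_Cset hd hdn μ hmin, gR]
        push_cast
        ring

lemma aeval_term (hd : 1 ≤ d) (hdn : d ≤ n) (μ : Nat.Partition n) :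
    aeval (zet d) ((Phi d) ^ (Em n d μ - Mm n d) * kP n d μ)
      = c0 n d * ((gg n d μ : ℝ) : ℂ) := by
  by_cases hmin : Em n d μ = Mm n d
  · -- minimal case
    have hmin' := (Em_eq_Mm_iff hd hdn μ).mp hmin
    rw [hmin, Nat.sub_self, pow_zero, one_mul, kP, map_mul, map_prod, map_prod]
    have hDpart : (∏ i ∈ Dset n d, aeval (zet d) ((cp d i) ^ (n / i - μ.parts.count i)))
        = Cc n d := by
      rw [Cc]
      refine Finset.prod_congr rfl fun i hi => ?_
      rw [map_pow, minimal_count_eq hd hdn μ hmin' i hi]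
    rw [hDpart]
    have hCpart : (∏ i ∈ Cset n d, aeval (zet d) ((1 + X ^ i : Polynomial ℤ) ^ (n / i - μ.parts.count i)))
        = ∏ i ∈ Cset n d, (1 + zet d ^ i) ^ (n / i - μ.parts.count i) := by
      refine Finset.prod_congr rfl fun i _ => ?_
      rw [map_pow, map_add, map_one, map_pow, aeval_X]
    rw [hCpart]
    set T := ∏ i ∈ Cset n d, (1 + zet d ^ i) ^ (n / i - μ.parts.count i) with hT
    set V := ∏ i ∈ Cset n d, (1 + zet d ^ i) ^ (μ.parts.count i) with hV
    have hTV : T * V = Dc n d := by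
      rw [hT, hV, ← Finset.prod_mul_distrib, Dc]
      refine Finset.prod_congr rfl fun i hi => ?_
      rw [← pow_add, Nat.sub_add_cancel (count_le_div μ (Finset.mem_filter.mp hi).1)]
    have hVval : V = ww d ^ (n % d) * ((gR n d μ : ℝ) : ℂ) := V_eq hd hdn μ hmin'
    have hVne : V ≠ 0 := by
      rw [hV, Finset.prod_ne_zero_iff]
      exact fun i hi => pow_ne_zero _ (one_add_zet_ne hd hi)
    have hgne : (gR n d μ : ℂ) ≠ 0 :=
      Complex.ofReal_ne_zero.mpr (ne_of_gt (gR_pos hd hdn μ hmin))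
    have hgg : gg n d μ = (gR n d μ)⁻¹ := by rw [gg, if_pos hmin]
    rw [hgg]
    have hwne : (ww d : ℂ) ^ (n % d) ≠ 0 := pow_ne_zero _ ww_ne_zero
    -- T = Dc / V
    have hTval : T = Dc n d / V := by
      rw [eq_div_iff hVne]; exact hTV
    rw [hTval, hVval, c0]
    push_cast
    field_simp
  · -- non-minimal case
    have h1 : 1 ≤ Em n d μ - Mm n d := by
      have := Mm_le_Em hd hdn μ
      omega
    rw [map_mul, map_pow, aeval_phi hd, zero_pow (by omega), zero_mul, gg, if_neg hmin]
    push_cast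
    ring

def mu0 (n d : ℕ) (hd : 1 ≤ d) : Nat.Partition n where
  parts := Multiset.replicate (n / d) d + Multiset.replicate (n % d) 1
  parts_pos := by
    intro i hi
    rcases Multiset.mem_add.mp hi with h | h
    · rw [Multiset.eq_of_mem_replicate h]; omega
    · rw [Multiset.eq_of_mem_replicate h]; omega
  parts_sum := by
    rw [Multiset.sum_add, Multiset.sum_replicate, Multiset.sum_replicate,
      smul_eq_mul, smul_eq_mul, mul_one, Nat.mul_comm]
    exact Nat.div_add_mod n d

lemma mu0_minimal (hd : 1 ≤ d) (hdn : d ≤ n) :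
    Em n d (mu0 n d hd) = Mm n d := by
  rw [Em_eq_Mm_iff hd hdn]
  have hcount : ∀ i, (mu0 n d hd).parts.count i
      = (if d = i then n / d else 0) + (if 1 = i then n % d else 0) := by
    intro i
    rw [mu0]
    simp only [Multiset.count_add, Multiset.count_replicate]
  rw [Finset.sum_congr rfl fun i _ => hcount i, Finset.sum_add_distrib]
  rw [Finset.sum_ite_eq (Dset n d) d (fun _ => n / d),
    Finset.sum_ite_eq (Dset n d) 1 (fun _ => n % d)]
  rw [if_pos (d_mem_Dset hd hdn)]
  by_cases hd1 : d = 1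
  · subst hd1; simp [Nat.mod_one]
  · have h1d : 1 ∉ Dset n d := by
      intro hmem
      have hdvd : d ∣ 1 := (Finset.mem_filter.mp hmem).2.1
      have := Nat.le_of_dvd one_pos hdvd
      omega
    rw [if_neg h1d]
    omega

lemma aeval_PP_ne (hd : 1 ≤ d) (hdn : d ≤ n) : aeval (zet d) (PP n d) ≠ 0 := by
  rw [PP, map_sum]
  have heq : ∀ μ : Nat.Partition n, μ ∈ (Finset.univ : Finset (Nat.Partition n)) →
      aeval (zet d) ((Phi d) ^ (Em n d μ - Mm n d) * kP n d μ)
        = c0 n d * ((gg n d μ : ℝ) : ℂ) := fun μ _ => aeval_term hd hdn μ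
  rw [Finset.sum_congr rfl heq, ← Finset.mul_sum]
  have hsum : ∑ μ : Nat.Partition n, ((gg n d μ : ℝ) : ℂ)
      = ((∑ μ : Nat.Partition n, gg n d μ : ℝ) : ℂ) := by push_cast; rfl
  rw [hsum]
  refine mul_ne_zero (c0_ne_zero hd) (Complex.ofReal_ne_zero.mpr (ne_of_gt ?_))
  refine Finset.sum_pos' (fun μ _ => ?_) ⟨mu0 n d hd, Finset.mem_univ _, ?_⟩
  · rw [gg]
    split_ifs with h
    · exact inv_nonneg.mpr (le_of_lt (gR_pos hd hdn μ h))
    · exact le_refl 0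
  · rw [gg, if_pos (mu0_minimal hd hdn)]
    exact inv_pos.mpr (gR_pos hd hdn _ (mu0_minimal hd hdn))

end CyclAux

/-- For every `n ≥ 1` and every `d` with `1 ≤ d ≤ n`, the cyclotomic polynomial
`Φ_{2d}(x)` does not divide `num(n,x)` in `ℤ[x]`; equivalently, `num(n, ζ_{2d}) ≠ 0`,
where `ζ_{2d} = e^{πi/d}` is a primitive `2d`-th root of unity. -/
theorem cyclotomic_not_dvd_numPoly (n d : ℕ) (hn : 1 ≤ n) (hd : 1 ≤ d) (hdn : d ≤ n) :
    ¬ (Polynomial.cyclotomic (2 * d) ℤ ∣ numPoly n) ∧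
      Polynomial.aeval (Complex.exp (Real.pi * Complex.I / (d : ℂ))) (numPoly n) ≠ 0 := by
  have hz : Complex.exp (Real.pi * Complex.I / (d : ℂ)) = CyclAux.zet d := rfl
  set ζ := CyclAux.zet d with hzdef
  set Φ : Polynomial ℤ := CyclAux.Phi d with hΦdef
  set M := CyclAux.Mm n d with hMdef
  set f : ℤ →+* ℂ := algebraMap ℤ ℂ with hfdef
  have hsum : (∑ μ : Nat.Partition n, hPoly n μ) = Φ ^ M * CyclAux.PP n d :=
    CyclAux.sum_hPoly_eq hd hdn
  have hspec : (∑ μ : Nat.Partition n, hPoly n μ) = GPoly n * numPoly n :=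
    (GPoly_dvd_sum n).choose_spec
  have hGdvd : Φ ^ M ∣ GPoly n := by
    refine Finset.dvd_gcd fun μ _ => ?_
    rw [CyclAux.hPoly_eq hd μ]
    exact dvd_mul_of_dvd_left (pow_dvd_pow _ (CyclAux.Mm_le_Em hd hdn μ)) _
  obtain ⟨u, hu⟩ := hGdvd
  have hPz : ¬ ((CyclAux.PP n d).map f).IsRoot ζ := by
    rw [IsRoot, Polynomial.eval_map, ← aeval_def]
    exact CyclAux.aeval_PP_ne hd hdn
  have hPne : (CyclAux.PP n d).map f ≠ 0 := by
    intro h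
    exact hPz (by rw [h]; exact Polynomial.IsRoot.def.mpr (by simp))
  have hΦCne : (Φ.map f) ≠ 0 := by
    rw [hΦdef, CyclAux.Phi, map_cyclotomic]
    exact cyclotomic_ne_zero _ ℂ
  have hsumC : (∑ μ : Nat.Partition n, hPoly n μ).map f
      = (Φ.map f) ^ M * (CyclAux.PP n d).map f := by
    rw [hsum, Polynomial.map_mul, Polynomial.map_pow]
  have hsumCne : (∑ μ : Nat.Partition n, hPoly n μ).map f ≠ 0 := by
    rw [hsumC]
    exact mul_ne_zero (pow_ne_zero _ hΦCne) hPne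
  have hspecC : (∑ μ : Nat.Partition n, hPoly n μ).map f
      = (GPoly n).map f * (numPoly n).map f := by
    rw [hspec, Polynomial.map_mul]
  have hGC : (GPoly n).map f = (Φ.map f) ^ M * u.map f := by
    rw [hu, Polynomial.map_mul, Polynomial.map_pow]
  have hGCne : (GPoly n).map f ≠ 0 :=
    left_ne_zero_of_mul (by rw [← hspecC]; exact hsumCne)
  have hnumCne : (numPoly n).map f ≠ 0 :=
    right_ne_zero_of_mul (by rw [← hspecC]; exact hsumCne)
  have huCne : u.map f ≠ 0 :=
    right_ne_zero_of_mul (by rw [← hGC]; exact hGCne)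
  -- root multiplicities
  have rm1 : Polynomial.rootMultiplicity ζ ((∑ μ : Nat.Partition n, hPoly n μ).map f)
      = Polynomial.rootMultiplicity ζ ((Φ.map f) ^ M) := by
    rw [hsumC, Polynomial.rootMultiplicity_mul (by rw [← hsumC]; exact hsumCne),
      Polynomial.rootMultiplicity_eq_zero hPz, add_zero]
  have rm2 : Polynomial.rootMultiplicity ζ ((∑ μ : Nat.Partition n, hPoly n μ).map f)
      = Polynomial.rootMultiplicity ζ ((GPoly n).map f)
        + Polynomial.rootMultiplicity ζ ((numPoly n).map f) := by
    rw [hspecC, Polynomial.rootMultiplicity_mul (by rw [← hspecC]; exact hsumCne)]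
  have rm3 : Polynomial.rootMultiplicity ζ ((GPoly n).map f)
      = Polynomial.rootMultiplicity ζ ((Φ.map f) ^ M)
        + Polynomial.rootMultiplicity ζ (u.map f) := by
    rw [hGC, Polynomial.rootMultiplicity_mul (by rw [← hGC]; exact hGCne)]
  have hrm0 : Polynomial.rootMultiplicity ζ ((numPoly n).map f) = 0 := by omega
  have haeval : Polynomial.aeval ζ (numPoly n) ≠ 0 := by
    rw [aeval_def, ← Polynomial.eval_map]
    intro h
    have : 0 < Polynomial.rootMultiplicity ζ ((numPoly n).map f) :=
      (Polynomial.rootMultiplicity_pos hnumCne).mpr h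
    omega
  constructor
  · intro hdvd
    obtain ⟨t, ht⟩ := hdvd
    apply haeval
    rw [ht, map_mul]
    have : Polynomial.aeval ζ (Polynomial.cyclotomic (2*d) ℤ) = 0 := CyclAux.aeval_phi hd
    rw [this, zero_mul]
  · rw [hz]
    exact haeval
end

section
/- For every integer n ≥ 1, the evaluation of the ternary-partition numerator at x = −1 satisfies num_T(n,−1) = 3^{v_3(n!)}, where v_3(M) denotes the exponent of 3 in the prime factorization of the positive integer M. -/
open Polynomial Finset
open scoped Classical

/-- The ternary partitions of `n`: partitions of `n` all of whose parts are powers of `3`. -/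
noncomputable def terParts (n : ℕ) : Finset (Nat.Partition n) :=
  Finset.univ.filter (fun μ => ∀ i ∈ μ.parts, ∃ k : ℕ, i = 3 ^ k)

/-- `h_{T,λ}(x) = ∏_{k ≥ 0, 3^k ≤ n} (1+x^{3^k})^(⌊n/3^k⌋ - m_λ(3^k))` in `ℤ[x]`. -/
noncomputable def hT (n : ℕ) (μ : Nat.Partition n) : Polynomial ℤ :=
  ∏ k ∈ (Finset.range (n + 1)).filter (fun k => 3 ^ k ≤ n),
    (1 + X ^ (3 ^ k)) ^ (n / 3 ^ k - μ.parts.count (3 ^ k))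

/-- `G_T(n,x)`: the (normalized) gcd of the `h_{T,λ}(x)` over ternary partitions `λ` of `n`. -/
noncomputable def GT (n : ℕ) : Polynomial ℤ :=
  (terParts n).gcd (hT n)

theorem GT_dvd_sum (n : ℕ) :
    ∃ q : Polynomial ℤ, (∑ μ ∈ terParts n, hT n μ) = GT n * q :=
  exists_eq_mul_right_of_dvd (Finset.dvd_sum fun _ hμ => Finset.gcd_dvd hμ)

/-- `num_T(n,x) = (∑_{λ ternary partition of n} h_{T,λ}(x)) / G_T(n,x)`. -/
noncomputable def numT (n : ℕ) : Polynomial ℤ :=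
  (GT_dvd_sum n).choose

/-!
Since `1 + x ^ 3 ^ k = ∏_{j ≤ k} Φ_{2·3^j}(x)`, every `h_{T,λ}` is a product of powers of the
pairwise distinct irreducibles `Φ_{2·3^j}`, `3^j ≤ n`. The exponent of `Φ_{2·3^j}` is
`∑_{k > j} ⌊n/3^k⌋ + (⌊n/3^j⌋ - #{parts ≥ 3^j})`, and the second summand vanishes for the
partition into `⌊n/3^j⌋` parts `3^j` and ones. Hence `G_T` is the product of the first summands,
and `num_T` is the sum of the cofactors. At `x = -1`, `Φ_2` vanishes while every other `Φ_{2·3^j}`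
equals `3`, so only the all-ones partition (the only one with `n` parts) contributes, namely
`3 ^ ∑_{j ≥ 1} ⌊n/3^j⌋`, which is `3 ^ v₃(n!)` by Legendre's formula.
-/

theorem Finset.gcd_prod_pow_eq_one {α ι κ : Type*} [CommMonoidWithZero α]
    [NormalizedGCDMonoid α] [UniqueFactorizationMonoid α] {s : Finset ι} {T : Finset κ}
    {p : ι → α} {f : κ → ι → ℕ} (hp : ∀ i ∈ s, Prime (p i))
    (hp_inj : ∀ i ∈ s, ∀ j ∈ s, Associated (p i) (p j) → i = j) (hT : T.Nonempty)
    (hf : ∀ i ∈ s, ∃ μ ∈ T, f μ i = 0) :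
    T.gcd (fun μ => ∏ i ∈ s, p i ^ f μ i) = 1 := by
  set g := T.gcd (fun μ => ∏ i ∈ s, p i ^ f μ i)
  have hp_not_dvd : ∀ i ∈ s, ¬p i ∣ g := by
    intro i hi hdvd
    obtain ⟨μ, hμ, hfμ⟩ := hf i hi
    obtain ⟨j, hj, hij⟩ := ((hp i hi).dvd_finsetProd_iff _).mp (hdvd.trans (gcd_dvd hμ))
    obtain rfl := hp_inj i hi j hj
      ((hp i hi).associated_of_dvd (hp j hj) ((hp i hi).dvd_of_dvd_pow hij))
    rw [hfμ, pow_zero] at hij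
    exact (hp i hi).not_dvd_one hij
  rcases subsingleton_or_nontrivial α with _ | _
  · exact Subsingleton.elim _ _
  obtain ⟨μ₀, hμ₀⟩ := hT
  have hg_dvd : g ∣ ∏ i ∈ s, p i ^ f μ₀ i := gcd_dvd hμ₀
  have hg_ne : g ≠ 0 := ne_zero_of_dvd_ne_zero
    (prod_ne_zero_iff.mpr fun i hi => pow_ne_zero _ (hp i hi).ne_zero) hg_dvd
  have hg_unit : IsUnit g := by
    by_contra hg
    obtain ⟨q, hq, hqg⟩ := WfDvdMonoid.exists_irreducible_factor hg hg_ne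
    obtain ⟨i, hi, hqi⟩ := (hq.prime.dvd_finsetProd_iff _).mp (hqg.trans hg_dvd)
    exact hp_not_dvd i hi <|
      (hq.prime.associated_of_dvd (hp i hi) (hq.prime.dvd_of_dvd_pow hqi)).symm.dvd.trans hqg
  simpa only [g, normalize_gcd] using normalize_eq_one.mpr hg_unit

theorem Finset.prod_range_prod_range_pow {M : Type*} [CommMonoid M] (f : ℕ → M) (e : ℕ → ℕ)
    (K : ℕ) : ∏ k ∈ range (K + 1), (∏ j ∈ range (k + 1), f j) ^ e k =
      ∏ j ∈ range (K + 1), f j ^ ∑ k ∈ Ico j (K + 1), e k := by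
  simp_rw [← prod_pow, ← prod_pow_eq_pow_sum]
  refine prod_comm' fun k j => ?_
  simp only [mem_range, mem_Ico]
  omega

namespace Polynomial

variable (R : Type*) [CommRing R]

theorem cyclotomic_two_mul_three_pow_succ (j : ℕ) :
    cyclotomic (2 * 3 ^ (j + 1)) R = X ^ (2 * 3 ^ j) - X ^ 3 ^ j + 1 := by
  induction j with
  | zero => simp
  | succ j ih =>
    rw [pow_succ 3 (j + 1), ← mul_assoc, ← cyclotomic_expand_eq_cyclotomic Nat.prime_three
      (dvd_mul_of_dvd_right (dvd_pow_self 3 j.succ_ne_zero) 2), ih]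
    simp only [map_add, map_sub, map_one, map_pow, expand_X, ← pow_mul]
    ring_nf

theorem prod_cyclotomic_two_mul_three_pow (k : ℕ) :
    ∏ j ∈ range (k + 1), cyclotomic (2 * 3 ^ j) R = 1 + X ^ 3 ^ k := by
  induction k with
  | zero => simp [add_comm]
  | succ k ih =>
    rw [prod_range_succ, ih, cyclotomic_two_mul_three_pow_succ, pow_succ 3 k, mul_comm 2,
      pow_mul X _ 2, pow_mul X _ 3]
    ring

theorem eval_neg_one_cyclotomic_two_mul_three_pow_succ (j : ℕ) :
    eval (-1) (cyclotomic (2 * 3 ^ (j + 1)) R) = 3 := by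
  have h_odd : Odd (3 ^ j) := Odd.pow (by decide)
  rw [cyclotomic_two_mul_three_pow_succ, eval_add, eval_sub, eval_pow, eval_pow, eval_X, eval_one,
    pow_mul, neg_one_sq, one_pow, h_odd.neg_one_pow]
  norm_num

end Polynomial

theorem Nat.Partition.parts_eq_replicate_one_of_card_eq {n : ℕ} (μ : n.Partition)
    (h : Multiset.card μ.parts = n) : μ.parts = Multiset.replicate n 1 := by
  refine Multiset.eq_replicate.mpr ⟨h, fun p hp => ?_⟩
  by_contra hp1
  have h2 : 2 ≤ p := by have := μ.parts_pos hp; omega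
  have hrest := Multiset.card_nsmul_le_sum (s := μ.parts.erase p) (a := 1)
    fun x hx => μ.parts_pos (Multiset.mem_of_mem_erase hx)
  have hsum := μ.parts_sum
  have hcard := Multiset.card_erase_of_mem hp
  rw [← Multiset.cons_erase hp, Multiset.sum_cons] at hsum
  simp only [smul_eq_mul, mul_one, Nat.pred_eq_sub_one] at hrest hcard
  omega

theorem Nat.Partition.card_parts_le {n : ℕ} (μ : n.Partition) : Multiset.card μ.parts ≤ n := by
  simpa [μ.parts_sum] using Multiset.card_nsmul_le_sum (fun x hx => μ.parts_pos hx) (a := 1)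

section TernaryPartitions

variable {n : ℕ} {μ : n.Partition}

theorem mem_terParts : μ ∈ terParts n ↔ ∀ i ∈ μ.parts, ∃ k : ℕ, i = 3 ^ k := by
  simp [terParts]

theorem filter_three_pow_le_eq_range (hn : n ≠ 0) :
    (range (n + 1)).filter (fun k => 3 ^ k ≤ n) = range (Nat.log 3 n + 1) := by
  ext k
  simp only [mem_filter, mem_range, Nat.lt_succ_iff,
    ← Nat.le_log_iff_pow_le (b := 3) (by norm_num) hn]
  exact ⟨And.right, fun hk => ⟨hk.trans (Nat.log_le_self 3 n), hk⟩⟩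

theorem sum_count_three_pow_mul (hn : n ≠ 0) (hμ : μ ∈ terParts n) (g : ℕ → ℕ) :
    ∑ k ∈ range (Nat.log 3 n + 1), μ.parts.count (3 ^ k) * g (3 ^ k) = (μ.parts.map g).sum := by
  have h_inj : Set.InjOn (3 ^ ·) (range (Nat.log 3 n + 1) : Set ℕ) :=
    (Nat.pow_right_injective (by norm_num : 2 ≤ 3)).injOn
  rw [sum_multiset_map_count, ← sum_image (f := fun m => μ.parts.count m * g m) h_inj]
  refine (sum_subset (fun i hi => ?_) fun i _ hi => ?_).symm
  · obtain ⟨k, rfl⟩ := mem_terParts.mp hμ i (Multiset.mem_toFinset.mp hi)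
    have hle : 3 ^ k ≤ n :=
      μ.parts_sum ▸ Multiset.le_sum_of_mem (Multiset.mem_toFinset.mp hi)
    exact mem_image_of_mem _ (mem_range.mpr (Nat.lt_succ_of_le
      ((Nat.le_log_iff_pow_le (by norm_num) hn).mpr hle)))
  · rw [Multiset.count_eq_zero.mpr (Multiset.mem_toFinset.not.mp hi), zero_mul]

/-- For a ternary partition, the number of parts that are at least `3 ^ j`. -/
def tailCount (μ : n.Partition) (j : ℕ) : ℕ :=
  ∑ k ∈ Ico j (Nat.log 3 n + 1), μ.parts.count (3 ^ k)

theorem tailCount_zero (hn : n ≠ 0) (hμ : μ ∈ terParts n) :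
    tailCount μ 0 = Multiset.card μ.parts := by
  simpa [tailCount, ← range_eq_Ico] using sum_count_three_pow_mul hn hμ 1

theorem tailCount_le_div (hn : n ≠ 0) (hμ : μ ∈ terParts n) (j : ℕ) :
    tailCount μ j ≤ n / 3 ^ j := by
  rw [Nat.le_div_iff_mul_le (by positivity), tailCount, sum_mul]
  calc ∑ k ∈ Ico j (Nat.log 3 n + 1), μ.parts.count (3 ^ k) * 3 ^ j
      ≤ ∑ k ∈ Ico j (Nat.log 3 n + 1), μ.parts.count (3 ^ k) * 3 ^ k :=
        sum_le_sum fun k hk => Nat.mul_le_mul_left _ (Nat.pow_le_pow_right (by norm_num)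
          (mem_Ico.mp hk).1)
    _ ≤ ∑ k ∈ range (Nat.log 3 n + 1), μ.parts.count (3 ^ k) * 3 ^ k :=
        sum_le_sum_of_subset (fun k hk => mem_range.mpr (mem_Ico.mp hk).2)
    _ = n := by simpa [μ.parts_sum] using sum_count_three_pow_mul hn hμ id

theorem count_three_pow_le_div (hn : n ≠ 0) (hμ : μ ∈ terParts n) {k : ℕ}
    (hk : k ≤ Nat.log 3 n) : μ.parts.count (3 ^ k) ≤ n / 3 ^ k :=
  (single_le_sum (f := fun k => μ.parts.count (3 ^ k)) (fun _ _ => Nat.zero_le _)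
    (mem_Ico.mpr ⟨le_rfl, Nat.lt_succ_of_le hk⟩)).trans (tailCount_le_div hn hμ k)

variable (n) in
def gcdExponent (j : ℕ) : ℕ := ∑ k ∈ Ico (j + 1) (Nat.log 3 n + 1), n / 3 ^ k

theorem sum_div_sub_count_eq (hn : n ≠ 0) (hμ : μ ∈ terParts n) {j : ℕ} (hj : j ≤ Nat.log 3 n) :
    ∑ k ∈ Ico j (Nat.log 3 n + 1), (n / 3 ^ k - μ.parts.count (3 ^ k)) =
      gcdExponent n j + (n / 3 ^ j - tailCount μ j) := by
  rw [sum_tsub_distrib _ fun k hk => count_three_pow_le_div hn hμ (Nat.lt_add_one_iff.mp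
    (mem_Ico.mp hk).2), sum_eq_sum_Ico_succ_bot (Nat.lt_add_one_iff.mpr hj)]
  have := tailCount_le_div hn hμ j
  unfold tailCount gcdExponent at *
  omega

variable (n) in
noncomputable def GTprod : ℤ[X] :=
  ∏ j ∈ range (Nat.log 3 n + 1), cyclotomic (2 * 3 ^ j) ℤ ^ gcdExponent n j

noncomputable def hTcofactor (μ : n.Partition) : ℤ[X] :=
  ∏ j ∈ range (Nat.log 3 n + 1), cyclotomic (2 * 3 ^ j) ℤ ^ (n / 3 ^ j - tailCount μ j)

theorem hT_eq_GTprod_mul (hn : n ≠ 0) (hμ : μ ∈ terParts n) :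
    hT n μ = GTprod n * hTcofactor μ := by
  simp_rw [hT, filter_three_pow_le_eq_range hn, ← prod_cyclotomic_two_mul_three_pow ℤ,
    prod_range_prod_range_pow, GTprod, hTcofactor, ← prod_mul_distrib, ← pow_add]
  refine prod_congr rfl fun j hj => ?_
  rw [sum_div_sub_count_eq hn hμ (Nat.lt_succ_iff.mp (mem_range.mp hj))]

variable (n) in
def threePowPartition (j : ℕ) : n.Partition where
  parts := Multiset.replicate (n / 3 ^ j) (3 ^ j) + Multiset.replicate (n % 3 ^ j) 1
  parts_pos := by
    intro i hi
    rcases Multiset.mem_add.mp hi with h | h <;> rw [Multiset.eq_of_mem_replicate h] <;> positivity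
  parts_sum := by simp [Nat.div_add_mod']

theorem threePowPartition_mem (j : ℕ) : threePowPartition n j ∈ terParts n := by
  refine mem_terParts.mpr fun i hi => ?_
  rcases Multiset.mem_add.mp hi with h | h
  · exact ⟨j, Multiset.eq_of_mem_replicate h⟩
  · exact ⟨0, Multiset.eq_of_mem_replicate h⟩

theorem count_threePowPartition (j k : ℕ) :
    (threePowPartition n j).parts.count (3 ^ k) =
      (if k = j then n / 3 ^ j else 0) + (if k = 0 then n % 3 ^ j else 0) := by
  simp [threePowPartition, Multiset.count_replicate, eq_comm (a := 1), eq_comm (a := 3 ^ j)]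

theorem tailCount_threePowPartition_self {j : ℕ} (hj : j ≤ Nat.log 3 n) :
    tailCount (threePowPartition n j) j = n / 3 ^ j := by
  rcases Nat.eq_zero_or_pos j with rfl | hj0
  · simp [tailCount, count_threePowPartition, Nat.mod_one]
  · simp [tailCount, count_threePowPartition, sum_add_distrib, hj, hj0.ne']

theorem tailCount_threePowPartition_zero {i : ℕ} (hi : 0 < i) :
    tailCount (threePowPartition n 0) i = 0 := by
  refine sum_eq_zero fun k hk => ?_
  have hk0 : k ≠ 0 := by have := (mem_Ico.mp hk).1; omega
  simp [count_threePowPartition, hk0]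

theorem GTprod_monic : (GTprod n).Monic :=
  monic_prod_of_monic _ _ fun _ _ => (cyclotomic.monic _ ℤ).pow _

theorem GT_eq_GTprod (hn : n ≠ 0) : GT n = GTprod n := by
  have h_prime (j : ℕ) : Prime (cyclotomic (2 * 3 ^ j) ℤ) :=
    (cyclotomic.irreducible (by positivity)).prime
  have h_inj (i j : ℕ) (h : Associated (cyclotomic (2 * 3 ^ i) ℤ) (cyclotomic (2 * 3 ^ j) ℤ)) :
      i = j :=
    Nat.pow_right_injective (le_refl 2) <| by
      simpa using cyclotomic_injective (eq_of_monic_of_associated (cyclotomic.monic _ ℤ)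
        (cyclotomic.monic _ ℤ) h)
  have h_coprime : (terParts n).gcd hTcofactor = 1 :=
    gcd_prod_pow_eq_one (fun j _ => h_prime j) (fun i _ j _ => h_inj i j)
      ⟨_, threePowPartition_mem 0⟩ fun j hj => ⟨threePowPartition n j, threePowPartition_mem j,
        by rw [tailCount_threePowPartition_self (Nat.lt_add_one_iff.mp (mem_range.mp hj)),
          Nat.sub_self]⟩
  rw [GT, gcd_congr rfl fun μ hμ => hT_eq_GTprod_mul hn hμ, Finset.gcd_mul_left, h_coprime,
    mul_one, GTprod_monic.normalize_eq_self]

theorem numT_eq_sum_hTcofactor (hn : n ≠ 0) : numT n = ∑ μ ∈ terParts n, hTcofactor μ := by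
  have h_spec : ∑ μ ∈ terParts n, hT n μ = GT n * numT n := (GT_dvd_sum n).choose_spec
  refine mul_left_cancel₀ (GTprod_monic (n := n)).ne_zero ?_
  calc GTprod n * numT n = ∑ μ ∈ terParts n, hT n μ := by rw [h_spec, GT_eq_GTprod hn]
    _ = GTprod n * ∑ μ ∈ terParts n, hTcofactor μ := by
      rw [mul_sum]
      exact sum_congr rfl fun μ hμ => hT_eq_GTprod_mul hn hμ

theorem eval_neg_one_hTcofactor_eq_zero (hn : n ≠ 0) (hμ : μ ∈ terParts n)
    (hμ_ne : μ ≠ threePowPartition n 0) : eval (-1) (hTcofactor μ) = 0 := by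
  have h_card : Multiset.card μ.parts < n := by
    refine μ.card_parts_le.lt_of_ne fun h => hμ_ne (Nat.Partition.ext ?_)
    simp [μ.parts_eq_replicate_one_of_card_eq h, threePowPartition, Nat.mod_one]
  rw [hTcofactor, eval_prod]
  refine prod_eq_zero (mem_range.mpr (Nat.succ_pos _)) ?_
  rw [tailCount_zero hn hμ, eval_pow, pow_zero, mul_one, cyclotomic_two]
  simp only [eval_add, eval_X, eval_one, neg_add_cancel]
  exact zero_pow (by omega)

theorem eval_neg_one_hTcofactor_threePowPartition_zero :
    eval (-1) (hTcofactor (threePowPartition n 0)) =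
      3 ^ ∑ j ∈ Ico 1 (Nat.log 3 n + 1), n / 3 ^ j := by
  rw [hTcofactor, eval_prod, range_eq_Ico, prod_eq_prod_Ico_succ_bot (Nat.add_one_pos _),
    tailCount_threePowPartition_self (Nat.zero_le _), Nat.sub_self, pow_zero, eval_one, one_mul,
    ← prod_pow_eq_pow_sum]
  refine prod_congr rfl fun j hj => ?_
  obtain ⟨i, rfl⟩ : ∃ i, j = i + 1 := ⟨j - 1, by have := (mem_Ico.mp hj).1; omega⟩
  rw [eval_pow, eval_neg_one_cyclotomic_two_mul_three_pow_succ,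
    tailCount_threePowPartition_zero i.succ_pos, Nat.sub_zero]

end TernaryPartitions

/-- For every integer `n ≥ 1`, the evaluation of the ternary-partition numerator at `x = −1`
satisfies `num_T(n,−1) = 3^{v₃(n!)}`, where `v₃(M)` is the exponent of `3` in the prime
factorization of `M`. -/
theorem numT_eval_neg_one (n : ℕ) (hn : 1 ≤ n) :
    Polynomial.eval (-1 : ℤ) (numT n) =
      3 ^ ((Nat.factorial n).factorization 3) := by
  have hn₀ : n ≠ 0 := Nat.one_le_iff_ne_zero.mp hn
  rw [numT_eq_sum_hTcofactor hn₀, eval_finsetSum,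
    sum_eq_single_of_mem _ (threePowPartition_mem 0) fun μ hμ hμ_ne =>
      eval_neg_one_hTcofactor_eq_zero hn₀ hμ hμ_ne,
    eval_neg_one_hTcofactor_threePowPartition_zero,
    Nat.factorization_factorial Nat.prime_three (Nat.lt_add_one _)]
end

section
/- Fix integers n, d ≥ 1 and put a := ⌊n/d⌋. The exponent of the cyclotomic polynomial Φ_{2d}(x) in G(n,x) (the largest k such that Φ_{2d}(x)^k divides G(n,x) in ℤ[x]) equals Σ_{j>1, j odd} ⌊n/(d·j)⌋. -/
open Polynomial Finset

-- Auxiliary lemmas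

lemma phiPrime {d : ℕ} (hd : 1 ≤ d) : Prime (cyclotomic (2*d) ℤ) :=
  UniqueFactorizationMonoid.irreducible_iff_prime.mp (cyclotomic.irreducible (by omega))

lemma eval_zero_of_phi_dvd {d : ℕ} (hd : 1 ≤ d) {ζ : ℂ} (hζ : IsPrimitiveRoot ζ (2*d))
    {q : Polynomial ℤ} (h : cyclotomic (2*d) ℤ ∣ q) :
    (q.map (Int.castRingHom ℂ)).eval ζ = 0 := by
  have h2 : cyclotomic (2*d) ℂ ∣ q.map (Int.castRingHom ℂ) := by
    simpa [map_cyclotomic] using Polynomial.map_dvd (Int.castRingHom ℂ) h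
  obtain ⟨c, hc⟩ := h2
  rw [hc, eval_mul, (hζ.isRoot_cyclotomic (by omega)).eq_zero, zero_mul]

lemma cond_of_phi_dvd {d i : ℕ} (hd : 1 ≤ d)
    (h : cyclotomic (2*d) ℤ ∣ 1 + X ^ i) : d ∣ i ∧ Odd (i / d) := by
  obtain ⟨ζ, hζ⟩ : ∃ ζ : ℂ, IsPrimitiveRoot ζ (2*d) :=
    ⟨_, Complex.isPrimitiveRoot_exp _ (by omega)⟩
  have h0 : (1 : ℂ) + ζ ^ i = 0 := by
    simpa using eval_zero_of_phi_dvd hd hζ h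
  have hzi : ζ ^ i = -1 := by linear_combination h0
  have h2i : ζ ^ (2*i) = 1 := by
    rw [two_mul, pow_add, hzi]; ring
  have hdvd : 2*d ∣ 2*i := (hζ.pow_eq_one_iff_dvd _).mp h2i
  have hdi : d ∣ i := (Nat.mul_dvd_mul_iff_left (by norm_num : 0 < 2)).mp hdvd
  refine ⟨hdi, ?_⟩
  have hζd : ζ ^ d = -1 :=
    (hζ.pow (by omega) (by ring)).eq_neg_one_of_two_right
  by_contra hodd
  have heven := Nat.not_odd_iff_even.mp hodd
  have hone : ζ ^ i = 1 := by
    rw [← Nat.mul_div_cancel' hdi, pow_mul, hζd, heven.neg_one_pow]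
  rw [hzi] at hone; norm_num at hone

lemma phi_dvd_of_cond {d i : ℕ} (hd : 1 ≤ d) (hdi : d ∣ i) (hodd : Odd (i / d)) :
    cyclotomic (2*d) ℤ ∣ 1 + X ^ i := by
  have h1 : cyclotomic (2*d) ℤ ∣ (X ^ d - 1) * (X ^ d + 1) := by
    have := cyclotomic.dvd_X_pow_sub_one (2*d) ℤ
    have heq : (X : Polynomial ℤ) ^ (2*d) - 1 = (X ^ d - 1) * (X ^ d + 1) := by
      rw [two_mul, pow_add]; ring
    rwa [heq] at this
  have h2 : cyclotomic (2*d) ℤ ∣ X ^ d + 1 := by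
    rcases (phiPrime hd).dvd_mul.mp h1 with h | h
    · exfalso
      obtain ⟨ζ, hζ⟩ : ∃ ζ : ℂ, IsPrimitiveRoot ζ (2*d) :=
        ⟨_, Complex.isPrimitiveRoot_exp _ (by omega)⟩
      have h0 : (ζ : ℂ) ^ d - 1 = 0 := by
        simpa using eval_zero_of_phi_dvd hd hζ h
      have h2d : 2*d ∣ d := (hζ.pow_eq_one_iff_dvd _).mp (by linear_combination h0)
      have := Nat.le_of_dvd (by omega) h2d
      omega
    · exact h
  have h3 : (X : Polynomial ℤ) ^ d + 1 ∣ X ^ i + 1 := by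
    have := Odd.add_dvd_pow_add_pow ((X : Polynomial ℤ) ^ d) 1 hodd
    simpa [← pow_mul, Nat.mul_div_cancel' hdi, one_pow] using this
  have := h2.trans h3
  rwa [add_comm] at this

lemma phi_sq_not_dvd {d i : ℕ} (hd : 1 ≤ d) (hi : 1 ≤ i) :
    ¬ (cyclotomic (2*d) ℤ)^2 ∣ 1 + X ^ i := by
  intro h
  have hQ : (cyclotomic (2*d) ℚ)^2 ∣ (1 + X ^ i : Polynomial ℚ) := by
    have := Polynomial.map_dvd (Int.castRingHom ℚ) h
    simpa [map_cyclotomic, Polynomial.map_pow] using this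
  have hsep : Squarefree ((X : Polynomial ℚ) ^ (2*i) - 1) := by
    have : Separable ((X : Polynomial ℚ) ^ (2*i) - C 1) :=
      separable_X_pow_sub_C (1 : ℚ) (by positivity) one_ne_zero
    simpa [map_one] using this.squarefree
  have hdvd2 : (cyclotomic (2*d) ℚ)^2 ∣ (X : Polynomial ℚ) ^ (2*i) - 1 := by
    refine hQ.trans ⟨X ^ i - 1, ?_⟩
    rw [two_mul, pow_add]; ring
  have hu := hsep (cyclotomic (2*d) ℚ) (by rwa [← sq])
  have hdeg := degree_cyclotomic_pos (2*d) ℚ (by omega)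
  simp [isUnit_iff_degree_eq_zero.mp hu] at hdeg

lemma exists_unit_factor {d i : ℕ} (hd : 1 ≤ d) (hi : 1 ≤ i) (hdi : d ∣ i) (hodd : Odd (i / d)) :
    ∃ u : Polynomial ℤ, 1 + X ^ i = cyclotomic (2*d) ℤ * u ∧ ¬ cyclotomic (2*d) ℤ ∣ u := by
  obtain ⟨u, hu⟩ := phi_dvd_of_cond hd hdi hodd
  refine ⟨u, hu, fun hc => phi_sq_not_dvd hd hi ?_⟩
  obtain ⟨v, hv⟩ := hc
  exact ⟨v, by rw [hu, hv]; ring⟩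

/-- noncomputable cofactor function -/
noncomputable def uFun (d i : ℕ) : Polynomial ℤ :=
  if h : 1 ≤ d ∧ 1 ≤ i ∧ d ∣ i ∧ Odd (i / d) then
    (exists_unit_factor h.1 h.2.1 h.2.2.1 h.2.2.2).choose
  else 1

lemma uFun_spec {d i : ℕ} (hd : 1 ≤ d) (hi : 1 ≤ i) (hdi : d ∣ i) (hodd : Odd (i / d)) :
    1 + X ^ i = cyclotomic (2*d) ℤ * uFun d i ∧ ¬ cyclotomic (2*d) ℤ ∣ uFun d i := by
  rw [uFun, dif_pos ⟨hd, hi, hdi, hodd⟩]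
  exact (exists_unit_factor hd hi hdi hodd).choose_spec

lemma prod_factor (n d : ℕ) (hd : 1 ≤ d) (e : ℕ → ℕ) :
    ∃ b : Polynomial ℤ, (∏ i ∈ Icc 1 n, (1 + X^i)^(e i)) =
      cyclotomic (2*d) ℤ ^ (∑ i ∈ (Icc 1 n).filter (fun i => d ∣ i ∧ Odd (i/d)), e i) * b
      ∧ ¬ cyclotomic (2*d) ℤ ∣ b := by
  refine ⟨(∏ i ∈ (Icc 1 n).filter (fun i => d ∣ i ∧ Odd (i/d)), uFun d i ^ e i) *
      ∏ i ∈ (Icc 1 n).filter (fun i => ¬(d ∣ i ∧ Odd (i/d))), (1+X^i)^(e i), ?_, ?_⟩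
  · rw [← Finset.prod_filter_mul_prod_filter_not (Icc 1 n) (fun i => d ∣ i ∧ Odd (i/d))]
    have key : ∏ i ∈ (Icc 1 n).filter (fun i => d ∣ i ∧ Odd (i/d)), (1+X^i)^(e i) =
        cyclotomic (2*d) ℤ ^ (∑ i ∈ (Icc 1 n).filter (fun i => d ∣ i ∧ Odd (i/d)), e i) *
        ∏ i ∈ (Icc 1 n).filter (fun i => d ∣ i ∧ Odd (i/d)), uFun d i ^ e i := by
      rw [← Finset.prod_pow_eq_pow_sum, ← Finset.prod_mul_distrib]
      refine Finset.prod_congr rfl fun i hi => ?_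
      rw [Finset.mem_filter, Finset.mem_Icc] at hi
      rw [← mul_pow, ← (uFun_spec hd hi.1.1 hi.2.1 hi.2.2).1]
    rw [key]; ring
  · intro hdvd
    rcases (phiPrime hd).dvd_mul.mp hdvd with h | h
    · obtain ⟨i, hi, hdvd'⟩ := (Prime.dvd_finset_prod_iff (phiPrime hd) _).mp h
      rw [Finset.mem_filter, Finset.mem_Icc] at hi
      exact (uFun_spec hd hi.1.1 hi.2.1 hi.2.2).2 ((phiPrime hd).dvd_of_dvd_pow hdvd')
    · obtain ⟨i, hi, hdvd'⟩ := (Prime.dvd_finset_prod_iff (phiPrime hd) _).mp h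
      rw [Finset.mem_filter] at hi
      exact hi.2 (cond_of_phi_dvd hd ((phiPrime hd).dvd_of_dvd_pow hdvd'))

lemma reindexS (n d : ℕ) (hd : 1 ≤ d) (g : ℕ → ℕ) :
    ∑ i ∈ (Icc 1 n).filter (fun i => d ∣ i ∧ Odd (i/d)), g i
      = ∑ j ∈ (Icc 1 n).filter (fun j => Odd j ∧ d*j ≤ n), g (d*j) := by
  refine Finset.sum_nbij' (fun i => i / d) (fun j => d * j) ?_ ?_ ?_ ?_ ?_
  · intro a ha
    rw [Finset.mem_filter, Finset.mem_Icc] at ha ⊢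
    obtain ⟨⟨h1, h2⟩, hdvd, hodd⟩ := ha
    rw [Nat.mul_div_cancel' hdvd]
    have h3 : 1 ≤ a / d := hodd.pos
    refine ⟨⟨h3, le_trans (Nat.div_le_self a d) h2⟩, hodd, h2⟩
  · intro a ha
    rw [Finset.mem_filter, Finset.mem_Icc] at ha ⊢
    obtain ⟨⟨h1, h2⟩, hodd, hle⟩ := ha
    refine ⟨⟨by nlinarith, hle⟩, Dvd.intro a rfl, by rwa [Nat.mul_div_cancel_left a hd]⟩
  · intro a ha
    rw [Finset.mem_filter] at ha
    exact Nat.mul_div_cancel' ha.2.1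
  · intro a ha
    exact Nat.mul_div_cancel_left a hd
  · intro a ha
    rw [Finset.mem_filter] at ha
    rw [Nat.mul_div_cancel' ha.2.1]

lemma count_mul_le (s : Finset ℕ) (m : Multiset ℕ) : ∑ i ∈ s, m.count i * i ≤ m.sum := by
  calc ∑ i ∈ s, m.count i * i ≤ ∑ i ∈ s ∪ m.toFinset, m.count i * i :=
        Finset.sum_le_sum_of_subset Finset.subset_union_left
    _ = ∑ i ∈ m.toFinset, m.count i * i := by
        refine (Finset.sum_subset Finset.subset_union_right fun x _ hx => ?_).symm
        rw [Multiset.count_eq_zero.mpr (fun hm => hx (Multiset.mem_toFinset.mpr hm)), zero_mul]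
    _ = m.sum := by
        rw [Finset.sum_multiset_count m]
        simp [smul_eq_mul]

lemma odd_filter_split (n : ℕ) (hn : 1 ≤ n) :
    (Icc 1 n).filter (fun j => Odd j) = insert 1 ((Icc 3 n).filter (fun j => Odd j)) := by
  ext j
  simp only [Finset.mem_filter, Finset.mem_Icc, Finset.mem_insert, Nat.odd_iff]
  omega

lemma one_not_mem_odd3 (n : ℕ) : 1 ∉ (Icc 3 n).filter (fun j => Odd j) := by
  simp [Finset.mem_filter, Finset.mem_Icc]

lemma hsum1 (n d : ℕ) (hn : 1 ≤ n) (hd : 1 ≤ d) :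
    ∑ j ∈ (Icc 1 n).filter (fun j => Odd j ∧ d*j ≤ n), n / (d*j)
      = n / d + ∑ j ∈ (Icc 3 n).filter (fun j => Odd j), n / (d*j) := by
  have h1 : ∑ j ∈ (Icc 1 n).filter (fun j => Odd j ∧ d*j ≤ n), n / (d*j)
      = ∑ j ∈ (Icc 1 n).filter (fun j => Odd j), n / (d*j) := by
    refine Finset.sum_subset (fun x hx => ?_) (fun x hx hnx => ?_)
    · simp only [Finset.mem_filter] at hx ⊢; exact ⟨hx.1, hx.2.1⟩
    · simp only [Finset.mem_filter] at hx hnx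
      have : ¬ d * x ≤ n := fun hle => hnx ⟨hx.1, hx.2, hle⟩
      exact Nat.div_eq_of_lt (by omega)
  rw [h1, odd_filter_split n hn, Finset.sum_insert (one_not_mem_odd3 n), mul_one]

lemma hsum2 (n d : ℕ) (hd : 1 ≤ d) (m : Multiset ℕ) (hm : m.sum = n) :
    ∑ j ∈ (Icc 1 n).filter (fun j => Odd j ∧ d*j ≤ n), m.count (d*j) ≤ n / d := by
  rw [Nat.le_div_iff_mul_le hd]
  calc (∑ j ∈ (Icc 1 n).filter (fun j => Odd j ∧ d*j ≤ n), m.count (d*j)) * d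
      = ∑ j ∈ (Icc 1 n).filter (fun j => Odd j ∧ d*j ≤ n), m.count (d*j) * d := by
        rw [Finset.sum_mul]
    _ ≤ ∑ j ∈ (Icc 1 n).filter (fun j => Odd j ∧ d*j ≤ n), m.count (d*j) * (d*j) := by
        refine Finset.sum_le_sum fun j hj => ?_
        have h1 : 1 ≤ j := (Finset.mem_Icc.mp (Finset.mem_filter.mp hj).1).1
        exact Nat.mul_le_mul_left _ (by nlinarith)
    _ = ∑ i ∈ ((Icc 1 n).filter (fun j => Odd j ∧ d*j ≤ n)).image (fun j => d*j),
          m.count i * i := by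
        rw [Finset.sum_image (fun x _ y _ hxy => Nat.eq_of_mul_eq_mul_left hd hxy)]
    _ ≤ m.sum := count_mul_le _ _
    _ = n := hm

lemma E_ge (n d : ℕ) (hn : 1 ≤ n) (hd : 1 ≤ d) (μ : Nat.Partition n) :
    (∑ j ∈ (Icc 3 n).filter (fun j => Odd j), n / (d*j))
      ≤ ∑ i ∈ (Icc 1 n).filter (fun i => d ∣ i ∧ Odd (i/d)), (n / i - μ.parts.count i) := by
  rw [reindexS n d hd (fun i => n / i - μ.parts.count i)]
  have key : ∀ j ∈ (Icc 1 n).filter (fun j => Odd j ∧ d*j ≤ n),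
      n/(d*j) ≤ (n/(d*j) - μ.parts.count (d*j)) + μ.parts.count (d*j) :=
    fun _ _ => le_tsub_add
  have h := Finset.sum_le_sum key
  rw [Finset.sum_add_distrib] at h
  have h1 := hsum1 n d hn hd
  have h2 := hsum2 n d hd μ.parts μ.parts_sum
  omega

def part0 (n d : ℕ) (hn : 1 ≤ n) (hd : 1 ≤ d) : Nat.Partition n where
  parts := Multiset.replicate (n / d) d + (if n % d = 0 then 0 else {n % d})
  parts_pos := by
    intro i hi
    rw [Multiset.mem_add] at hi
    rcases hi with h | h
    · rw [Multiset.eq_of_mem_replicate h]; omega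
    · split_ifs at h with h0
      · simp at h
      · rw [Multiset.mem_singleton] at h; omega
  parts_sum := by
    have hdm := Nat.div_add_mod n d
    rw [Nat.mul_comm] at hdm
    rw [Multiset.sum_add, Multiset.sum_replicate, smul_eq_mul]
    split_ifs with h0
    · simp only [Multiset.sum_zero]; omega
    · rw [Multiset.sum_singleton]; omega

lemma part0_count (n d : ℕ) (hn : 1 ≤ n) (hd : 1 ≤ d) {j : ℕ} (hj : 1 ≤ j) :
    (part0 n d hn hd).parts.count (d*j) = if j = 1 then n / d else 0 := by
  show Multiset.count (d*j) (Multiset.replicate (n/d) d + _) = _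
  have hmod : n % d < d := Nat.mod_lt n (by omega)
  have h2 : Multiset.count (d*j) (if n % d = 0 then (0 : Multiset ℕ) else {n % d}) = 0 := by
    split_ifs
    · simp
    · rw [Multiset.count_singleton, if_neg]
      nlinarith
  rw [Multiset.count_add, Multiset.count_replicate, h2, add_zero]
  by_cases hj1 : j = 1
  · subst hj1; simp
  · have hj2 : 2 ≤ j := by omega
    rw [if_neg (by nlinarith : ¬ d = d*j), if_neg hj1]

lemma E_part0 (n d : ℕ) (hn : 1 ≤ n) (hd : 1 ≤ d) :
    ∑ i ∈ (Icc 1 n).filter (fun i => d ∣ i ∧ Odd (i/d)),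
        (n / i - (part0 n d hn hd).parts.count i)
      = ∑ j ∈ (Icc 3 n).filter (fun j => Odd j), n / (d*j) := by
  rw [reindexS n d hd (fun i => n / i - (part0 n d hn hd).parts.count i)]
  calc ∑ j ∈ (Icc 1 n).filter (fun j => Odd j ∧ d*j ≤ n),
        (n / (d*j) - (part0 n d hn hd).parts.count (d*j))
      = ∑ j ∈ (Icc 1 n).filter (fun j => Odd j ∧ d*j ≤ n),
          (if j = 1 then 0 else n / (d*j)) := by
        refine Finset.sum_congr rfl fun j hj => ?_
        have h1 : 1 ≤ j := (Finset.mem_Icc.mp (Finset.mem_filter.mp hj).1).1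
        rw [part0_count n d hn hd h1]
        split_ifs with h
        · subst h; rw [mul_one, Nat.sub_self]
        · rw [Nat.sub_zero]
    _ = ∑ j ∈ (Icc 1 n).filter (fun j => Odd j), (if j = 1 then 0 else n / (d*j)) := by
        refine Finset.sum_subset (fun x hx => ?_) (fun x hx hnx => ?_)
        · simp only [Finset.mem_filter] at hx ⊢; exact ⟨hx.1, hx.2.1⟩
        · simp only [Finset.mem_filter] at hx hnx
          have hgt : ¬ d * x ≤ n := fun hle => hnx ⟨hx.1, hx.2, hle⟩
          split_ifs with hx1
          · rfl
          · exact Nat.div_eq_of_lt (by omega)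
    _ = ∑ j ∈ (Icc 3 n).filter (fun j => Odd j), n / (d*j) := by
        rw [odd_filter_split n hn, Finset.sum_insert (one_not_mem_odd3 n), if_pos rfl, zero_add]
        refine Finset.sum_congr rfl fun j hj => ?_
        have : 3 ≤ j := (Finset.mem_Icc.mp (Finset.mem_filter.mp hj).1).1
        rw [if_neg (by omega)]

/-- For `n, d ≥ 1`, the exponent of `Φ_{2d}(x)` in `G(n,x)` (the largest `k` such that
`Φ_{2d}(x)^k` divides `G(n,x)` in `ℤ[x]`) equals `Σ_{j>1, j odd} ⌊n/(d·j)⌋`.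
(The terms with `j > n` vanish, so the sum is taken over odd `j` with `3 ≤ j ≤ n`.) -/
theorem exponent_of_cyclotomic_in_GPoly (n d : ℕ) (hn : 1 ≤ n) (hd : 1 ≤ d) :
    Polynomial.cyclotomic (2 * d) ℤ ^
        (∑ j ∈ (Finset.Icc 3 n).filter (fun j => Odd j), n / (d * j)) ∣ GPoly n ∧
      ¬ Polynomial.cyclotomic (2 * d) ℤ ^
        ((∑ j ∈ (Finset.Icc 3 n).filter (fun j => Odd j), n / (d * j)) + 1) ∣ GPoly n := by
  constructor
  · apply Finset.dvd_gcd
    intro μ _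
    obtain ⟨b, hb, -⟩ := prod_factor n d hd (fun i => n / i - μ.parts.count i)
    rw [hPoly, hb]
    exact Dvd.dvd.mul_right (pow_dvd_pow _ (E_ge n d hn hd μ)) b
  · intro hdvd
    have hg : GPoly n ∣ hPoly n (part0 n d hn hd) := Finset.gcd_dvd (Finset.mem_univ _)
    obtain ⟨b, hb, hnb⟩ := prod_factor n d hd (fun i => n / i - (part0 n d hn hd).parts.count i)
    have heq : hPoly n (part0 n d hn hd) =
        cyclotomic (2*d) ℤ ^ (∑ j ∈ (Finset.Icc 3 n).filter (fun j => Odd j), n / (d * j)) * b := by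
      rw [hPoly, hb, E_part0 n d hn hd]
    have h2 : cyclotomic (2*d) ℤ ^
        ((∑ j ∈ (Finset.Icc 3 n).filter (fun j => Odd j), n / (d * j)) + 1) ∣
        cyclotomic (2*d) ℤ ^ (∑ j ∈ (Finset.Icc 3 n).filter (fun j => Odd j), n / (d * j)) * b :=
      heq ▸ (hdvd.trans hg)
    rw [pow_succ, mul_dvd_mul_iff_left
      (pow_ne_zero _ (cyclotomic_ne_zero (2*d) ℤ))] at h2
    exact hnb h2
end
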